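/- arXiv:1903.09937 — 6 statements merged into one kernel-verified Lean document; each statement's English description precedes it below -/
import Mathlib

section
/- There exists a constant C > 0 such that for all continuous functions f, g : ℝ² → ℝ and every continuously differentiable function h : ℝ² → ℝ, each 1-periodic in both variables, one has ∫_{[0,1]²} |f g h| dx dz ≤ C ‖f‖_{L²} · ( sup_{z ∈ [0,1]} (∫₀¹ |g(x,z)|² dx)^{1/2} ) · ‖h‖_{L²}^{1/2} (‖h‖_{L²}^{1/2} + ‖∂_x h‖_{L²}^{1/2}). -/
open MeasureTheory

noncomputable section

/-- `f : ℝ² → ℝ` is 1-periodic in each of its two variables. -/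
def Per (f : ℝ × ℝ → ℝ) : Prop :=
  (∀ x z, f (x + 1, z) = f (x, z)) ∧ (∀ x z, f (x, z + 1) = f (x, z))

/-- Partial derivative in the first variable. -/
def pdx (f : ℝ × ℝ → ℝ) : ℝ × ℝ → ℝ := fun p => deriv (fun x => f (x, p.2)) p.1

/-- The `L²` norm over the fundamental domain `[0,1]²`. -/
def l2 (f : ℝ × ℝ → ℝ) : ℝ :=
  Real.sqrt (∫ x in (0:ℝ)..1, ∫ z in (0:ℝ)..1, f (x, z) ^ 2)

/-!
Freeze the vertical variable `z`. The one-dimensional Agmon inequality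
`sup_x |h(x,z)|² ≤ ∫ h(·,z)² + 2 ∫ |h ∂ₓh|(·,z)` bounds `∫ (g h)²(·,z)` by the squared `L²`-norm of
`g(·,z)`, hence by `S²` with `S` the supremum of these norms over `z`, times that Agmon bound. Integrating in `z`
and using Cauchy–Schwarz for `∫∫ |h ∂ₓh|` gives `‖g h‖² ≤ S² (‖h‖² + 2 ‖h‖ ‖∂ₓh‖)`, and a last
Cauchy–Schwarz against `f` concludes with `C = 2`.
-/

open Set

namespace TorusTrilinear

theorem integral_abs_mul_le_sqrt_mul_sqrt {α : Type*} [MeasurableSpace α] {μ : Measure α}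
    {u v : α → ℝ} (hu : MemLp u 2 μ) (hv : MemLp v 2 μ) :
    ∫ a, |u a * v a| ∂μ ≤ √(∫ a, u a ^ 2 ∂μ) * √(∫ a, v a ^ 2 ∂μ) := by
  have two : ENNReal.ofReal 2 = 2 := ENNReal.ofReal_ofNat 2
  have holder := integral_mul_norm_le_Lp_mul_Lq Real.HolderConjugate.two_two
    (two ▸ hu) (two ▸ hv)
  simp only [Real.norm_eq_abs, Real.rpow_two, sq_abs, ← Real.sqrt_eq_rpow] at holder
  simpa only [abs_mul] using holder

abbrev unitSquare : Set (ℝ × ℝ) := Ioc 0 1 ×ˢ Ioc 0 1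

theorem integrableOn_unitSquare {F : ℝ × ℝ → ℝ} (hF : Continuous F) :
    IntegrableOn F unitSquare :=
  (hF.continuousOn.integrableOn_compact (isCompact_Icc.prod isCompact_Icc)).mono_set
    (prod_mono Ioc_subset_Icc_self Ioc_subset_Icc_self)

theorem memLp_two_unitSquare {F : ℝ × ℝ → ℝ} (hF : Continuous F) :
    MemLp F 2 (volume.restrict unitSquare) :=
  (memLp_two_iff_integrable_sq hF.aestronglyMeasurable).2 (integrableOn_unitSquare (hF.pow 2))

theorem intervalIntegral_intervalIntegral_eq_setIntegral_unitSquare {F : ℝ × ℝ → ℝ}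
    (hF : Continuous F) :
    ∫ x in (0:ℝ)..1, ∫ z in (0:ℝ)..1, F (x, z) = ∫ p in unitSquare, F p := by
  simp only [intervalIntegral.integral_of_le zero_le_one]
  rw [Measure.volume_eq_prod, setIntegral_prod F (integrableOn_unitSquare hF)]

theorem intervalIntegral_intervalIntegral_swap_eq_setIntegral_unitSquare {F : ℝ × ℝ → ℝ}
    (hF : Continuous F) :
    ∫ z in (0:ℝ)..1, ∫ x in (0:ℝ)..1, F (x, z) = ∫ p in unitSquare, F p := by
  rw [← intervalIntegral_intervalIntegral_swap (F := fun x z => F (x, z)),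
    intervalIntegral_intervalIntegral_eq_setIntegral_unitSquare hF]
  rw [uIoc_of_le zero_le_one]
  exact integrableOn_unitSquare hF

theorem l2_eq_sqrt_setIntegral {f : ℝ × ℝ → ℝ} (hf : Continuous f) :
    l2 f = √(∫ p in unitSquare, f p ^ 2) := by
  rw [l2, intervalIntegral_intervalIntegral_eq_setIntegral_unitSquare (F := fun p => f p ^ 2)
    (hf.pow 2)]

theorem sq_l2_eq_setIntegral {f : ℝ × ℝ → ℝ} (hf : Continuous f) :
    l2 f ^ 2 = ∫ p in unitSquare, f p ^ 2 := by
  rw [l2_eq_sqrt_setIntegral hf, Real.sq_sqrt]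
  exact setIntegral_nonneg (measurableSet_Ioc.prod measurableSet_Ioc) fun _ _ => sq_nonneg _

theorem sq_le_integral_sq_add_two_mul_integral_abs_mul_deriv {u : ℝ → ℝ} (hu : ContDiff ℝ 1 u)
    {x : ℝ} (hx : x ∈ Icc (0:ℝ) 1) :
    u x ^ 2 ≤ (∫ t in (0:ℝ)..1, u t ^ 2) + 2 * ∫ t in (0:ℝ)..1, |u t * deriv u t| := by
  have hu2 : Continuous fun t => u t ^ 2 := hu.continuous.pow 2
  have hcont : Continuous fun t => 2 * u t * deriv u t :=
    (continuous_const.mul hu.continuous).mul (hu.continuous_deriv le_rfl)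
  obtain ⟨y, hy, hmin⟩ :=
    isCompact_Icc.exists_isMinOn (nonempty_Icc.2 zero_le_one)
      (hu2.continuousOn (s := Icc 0 1))
  have min_le_mean : u y ^ 2 ≤ ∫ t in (0:ℝ)..1, u t ^ 2 := by
    simpa using intervalIntegral.integral_mono_on zero_le_one
      (intervalIntegrable_const (μ := volume)) (hu2.intervalIntegrable 0 1) fun t ht => hmin ht
  have ftc : ∫ t in y..x, 2 * u t * deriv u t = u x ^ 2 - u y ^ 2 := by
    refine intervalIntegral.integral_eq_sub_of_hasDerivAt (f := fun s => u s ^ 2) (fun t _ => ?_)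
      (hcont.intervalIntegrable y x)
    simpa [mul_comm, mul_assoc] using
      ((hu.differentiable one_ne_zero t).hasDerivAt.fun_pow 2)
  have increment_le : ∫ t in y..x, 2 * u t * deriv u t
      ≤ 2 * ∫ t in (0:ℝ)..1, |u t * deriv u t| := by
    have hsub : uIoc y x ⊆ Ioc 0 1 := by
      have : uIcc y x ⊆ uIcc 0 1 := by
        rw [uIcc_of_le zero_le_one]; exact uIcc_subset_Icc hy hx
      simpa [uIoc_of_le zero_le_one] using uIoc_subset_uIoc_of_uIcc_subset_uIcc this
    calc ∫ t in y..x, 2 * u t * deriv u t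
        ≤ |∫ t in uIoc y x, 2 * u t * deriv u t| := by
          rw [← intervalIntegral.abs_integral_eq_abs_integral_uIoc]; exact le_abs_self _
      _ ≤ ∫ t in uIoc y x, |2 * u t * deriv u t| := abs_integral_le_integral_abs
      _ ≤ ∫ t in Ioc 0 1, |2 * u t * deriv u t| :=
          setIntegral_mono_set (hcont.abs.integrableOn_Icc.mono_set Ioc_subset_Icc_self)
            (ae_of_all _ fun _ => abs_nonneg _) hsub.eventuallyLE
      _ = 2 * ∫ t in (0:ℝ)..1, |u t * deriv u t| := by
          simp only [intervalIntegral.integral_of_le zero_le_one, mul_assoc, abs_mul,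
            abs_two, integral_const_mul]
  linarith

theorem continuous_pdx {h : ℝ × ℝ → ℝ} (hh : ContDiff ℝ 1 h) : Continuous (pdx h) := by
  have pdx_eq : pdx h = fun p => fderiv ℝ h p (1, 0) := by
    ext p
    have hline : HasDerivAt (fun x : ℝ => (x, p.2)) (1, 0) p.1 :=
      (hasDerivAt_id p.1).prodMk (hasDerivAt_const p.1 p.2)
    exact ((hh.differentiable one_ne_zero p).hasFDerivAt.comp_hasDerivAt p.1 hline).deriv
  rw [pdx_eq]
  exact (hh.continuous_fderiv one_ne_zero).clm_apply continuous_const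

def sliceL2 (g : ℝ × ℝ → ℝ) (z : ℝ) : ℝ := √(∫ x in (0:ℝ)..1, g (x, z) ^ 2)

theorem integral_slice_sq_le_sq_iSup_sliceL2 {g : ℝ × ℝ → ℝ} (hg : Continuous g) {z : ℝ}
    (hz : z ∈ Icc (0:ℝ) 1) :
    ∫ x in (0:ℝ)..1, g (x, z) ^ 2 ≤ (⨆ z : Icc (0:ℝ) 1, sliceL2 g z) ^ 2 := by
  have hcont : Continuous (sliceL2 g) := by unfold sliceL2; fun_prop
  have hbdd : BddAbove (range fun z : Icc (0:ℝ) 1 => sliceL2 g z) :=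
    (isCompact_range (hcont.comp continuous_subtype_val)).bddAbove
  have hsq : sliceL2 g z ^ 2 = ∫ x in (0:ℝ)..1, g (x, z) ^ 2 :=
    Real.sq_sqrt (intervalIntegral.integral_nonneg zero_le_one fun _ _ => sq_nonneg _)
  rw [← hsq]
  exact pow_le_pow_left₀ (Real.sqrt_nonneg _) (le_ciSup hbdd ⟨z, hz⟩) 2

theorem integral_slice_sq_mul_le {g h : ℝ × ℝ → ℝ} (hg : Continuous g) (hh : ContDiff ℝ 1 h)
    {z : ℝ} (hz : z ∈ Icc (0:ℝ) 1) :
    ∫ x in (0:ℝ)..1, (g (x, z) * h (x, z)) ^ 2 ≤ (⨆ z : Icc (0:ℝ) 1, sliceL2 g z) ^ 2 *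
      ((∫ x in (0:ℝ)..1, h (x, z) ^ 2) + 2 * ∫ x in (0:ℝ)..1, |h (x, z) * pdx h (x, z)|) := by
  have hhc := hh.continuous
  have agmon : ∀ x ∈ Icc (0:ℝ) 1, h (x, z) ^ 2 ≤
      (∫ x in (0:ℝ)..1, h (x, z) ^ 2) + 2 * ∫ x in (0:ℝ)..1, |h (x, z) * pdx h (x, z)| :=
    fun x hx => sq_le_integral_sq_add_two_mul_integral_abs_mul_deriv
      (hh.comp (contDiff_id.prodMk contDiff_const)) hx
  set N := (∫ x in (0:ℝ)..1, h (x, z) ^ 2) + 2 * ∫ x in (0:ℝ)..1, |h (x, z) * pdx h (x, z)|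
  calc ∫ x in (0:ℝ)..1, (g (x, z) * h (x, z)) ^ 2
      ≤ ∫ x in (0:ℝ)..1, g (x, z) ^ 2 * N := by
        refine intervalIntegral.integral_mono_on zero_le_one
          (Continuous.intervalIntegrable (by fun_prop) _ _)
          (Continuous.intervalIntegrable (by fun_prop) _ _)
          fun x hx => ?_
        rw [mul_pow]
        exact mul_le_mul_of_nonneg_left (agmon x hx) (sq_nonneg _)
    _ = (∫ x in (0:ℝ)..1, g (x, z) ^ 2) * N := intervalIntegral.integral_mul_const _ _
    _ ≤ _ := mul_le_mul_of_nonneg_right (integral_slice_sq_le_sq_iSup_sliceL2 hg hz)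
        ((sq_nonneg _).trans (agmon 0 (left_mem_Icc.2 zero_le_one)))

theorem setIntegral_sq_mul_le {g h : ℝ × ℝ → ℝ} (hg : Continuous g) (hh : ContDiff ℝ 1 h) :
    ∫ p in unitSquare, (g p * h p) ^ 2 ≤
      (⨆ z : Icc (0:ℝ) 1, sliceL2 g z) ^ 2 * (l2 h ^ 2 + 2 * (l2 h * l2 (pdx h))) := by
  have hhc := hh.continuous
  have hpc := continuous_pdx hh
  rw [← intervalIntegral_intervalIntegral_swap_eq_setIntegral_unitSquare (by fun_prop)]
  calc ∫ z in (0:ℝ)..1, ∫ x in (0:ℝ)..1, (g (x, z) * h (x, z)) ^ 2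
      ≤ ∫ z in (0:ℝ)..1, (⨆ z : Icc (0:ℝ) 1, sliceL2 g z) ^ 2 *
          ((∫ x in (0:ℝ)..1, h (x, z) ^ 2) + 2 * ∫ x in (0:ℝ)..1, |h (x, z) * pdx h (x, z)|) :=
        intervalIntegral.integral_mono_on zero_le_one
          (Continuous.intervalIntegrable (by fun_prop) _ _)
          (Continuous.intervalIntegrable (by fun_prop) _ _)
          fun z hz => integral_slice_sq_mul_le hg hh hz
    _ = (⨆ z : Icc (0:ℝ) 1, sliceL2 g z) ^ 2 *
          (l2 h ^ 2 + 2 * ∫ p in unitSquare, |h p * pdx h p|) := by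
        rw [intervalIntegral.integral_const_mul, intervalIntegral.integral_add
          (Continuous.intervalIntegrable (by fun_prop) _ _)
          (Continuous.intervalIntegrable (by fun_prop) _ _), intervalIntegral.integral_const_mul,
          intervalIntegral_intervalIntegral_swap_eq_setIntegral_unitSquare
            (F := fun p => h p ^ 2) (by fun_prop),
          intervalIntegral_intervalIntegral_swap_eq_setIntegral_unitSquare
            (F := fun p => |h p * pdx h p|) (by fun_prop),
          sq_l2_eq_setIntegral hhc]
    _ ≤ _ := by
        gcongr
        rw [l2_eq_sqrt_setIntegral hhc, l2_eq_sqrt_setIntegral hpc]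
        exact integral_abs_mul_le_sqrt_mul_sqrt (memLp_two_unitSquare hhc)
          (memLp_two_unitSquare hpc)

theorem sq_add_two_mul_le {a b : ℝ} (ha : 0 ≤ a) (hb : 0 ≤ b) :
    a ^ 2 + 2 * (a * b) ≤ (2 * √a * (√a + √b)) ^ 2 := by
  have hsa := Real.sq_sqrt ha
  have hsb := Real.sq_sqrt hb
  have : 0 ≤ √a * √b := by positivity
  nlinarith

end TorusTrilinear

open TorusTrilinear

theorem stmt1 :
    ∃ C : ℝ, 0 < C ∧
      ∀ f g h : ℝ × ℝ → ℝ,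
        Continuous f → Continuous g → ContDiff ℝ 1 h →
        Per f → Per g → Per h →
        (∫ x in (0:ℝ)..1, ∫ z in (0:ℝ)..1, |f (x, z) * g (x, z) * h (x, z)|) ≤
          C * l2 f * (⨆ z : Set.Icc (0:ℝ) 1, Real.sqrt (∫ x in (0:ℝ)..1, g (x, z.1) ^ 2)) *
            (l2 h) ^ ((1:ℝ)/2) * ((l2 h) ^ ((1:ℝ)/2) + (l2 (pdx h)) ^ ((1:ℝ)/2)) := by
  refine ⟨2, two_pos, fun f g h hf hg hh _ _ _ => ?_⟩
  have hhc := hh.continuous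
  set S := ⨆ z : Icc (0:ℝ) 1, sliceL2 g z
  have hS : 0 ≤ S := Real.iSup_nonneg fun _ => Real.sqrt_nonneg _
  have ha : 0 ≤ l2 h := Real.sqrt_nonneg _
  have hb : 0 ≤ l2 (pdx h) := Real.sqrt_nonneg _
  simp only [← Real.sqrt_eq_rpow]
  calc ∫ x in (0:ℝ)..1, ∫ z in (0:ℝ)..1, |f (x, z) * g (x, z) * h (x, z)|
      = ∫ p in unitSquare, |f p * (g p * h p)| := by
        simp only [← mul_assoc]
        exact intervalIntegral_intervalIntegral_eq_setIntegral_unitSquare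
          (F := fun p => |f p * g p * h p|) (by fun_prop)
    _ ≤ l2 f * √(∫ p in unitSquare, (g p * h p) ^ 2) := by
        rw [l2_eq_sqrt_setIntegral hf]
        exact integral_abs_mul_le_sqrt_mul_sqrt (memLp_two_unitSquare hf)
          (memLp_two_unitSquare (hg.mul hhc))
    _ ≤ l2 f * (S * (2 * √(l2 h) * (√(l2 h) + √(l2 (pdx h))))) := by
        refine mul_le_mul_of_nonneg_left ?_ (Real.sqrt_nonneg _)
        rw [Real.sqrt_le_left (by positivity), mul_pow]
        exact (setIntegral_sq_mul_le hg hh).trans (by gcongr; exact sq_add_two_mul_le ha hb)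
    _ = 2 * l2 f * S * √(l2 h) * (√(l2 h) + √(l2 (pdx h))) := by ring
end
end

section
/- Let u, w : ℝ² → ℝ be smooth (infinitely differentiable) functions, each 1-periodic in both variables, and suppose the pair (u, w) is divergence-free. Then ∫_{[0,1]²} ( u ∂_x u + w ∂_z u ) ∂_z∂_z u dx dz = 0. -/
open MeasureTheory

noncomputable section

/-- Partial derivative in the second variable. -/
def pdz (f : ℝ × ℝ → ℝ) : ℝ × ℝ → ℝ := fun p => deriv (fun z => f (p.1, z)) p.2

/-- The pair `(u, w)` is divergence-free. -/
def DivFree (u w : ℝ × ℝ → ℝ) : Prop := ∀ p : ℝ × ℝ, pdx u p + pdz w p = 0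

section Helpers

variable {f : ℝ × ℝ → ℝ}

lemma hasDerivAt_sliceX (hf : ContDiff ℝ (⊤ : ℕ∞) f) (x z : ℝ) :
    HasDerivAt (fun t => f (t, z)) (fderiv ℝ f (x, z) (1, 0)) x := by
  have h1 : HasDerivAt (fun t : ℝ => (t, z)) ((1 : ℝ), (0 : ℝ)) x :=
    HasDerivAt.prodMk (hasDerivAt_id x) (hasDerivAt_const x z)
  exact ((hf.differentiable (by simp) (x, z)).hasFDerivAt).comp_hasDerivAt x h1

lemma hasDerivAt_sliceZ (hf : ContDiff ℝ (⊤ : ℕ∞) f) (x z : ℝ) :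
    HasDerivAt (fun t => f (x, t)) (fderiv ℝ f (x, z) (0, 1)) z := by
  have h1 : HasDerivAt (fun t : ℝ => (x, t)) ((0 : ℝ), (1 : ℝ)) z :=
    HasDerivAt.prodMk (hasDerivAt_const z x) (hasDerivAt_id z)
  exact ((hf.differentiable (by simp) (x, z)).hasFDerivAt).comp_hasDerivAt z h1

lemma pdx_eq (hf : ContDiff ℝ (⊤ : ℕ∞) f) (x z : ℝ) :
    pdx f (x, z) = fderiv ℝ f (x, z) (1, 0) := (hasDerivAt_sliceX hf x z).deriv

lemma pdz_eq (hf : ContDiff ℝ (⊤ : ℕ∞) f) (x z : ℝ) :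
    pdz f (x, z) = fderiv ℝ f (x, z) (0, 1) := (hasDerivAt_sliceZ hf x z).deriv

lemma contDiff_pdx (hf : ContDiff ℝ (⊤ : ℕ∞) f) : ContDiff ℝ (⊤ : ℕ∞) (pdx f) := by
  have h : pdx f = fun p => fderiv ℝ f p (1, 0) := by
    funext p; exact (hasDerivAt_sliceX hf p.1 p.2).deriv
  rw [h]
  exact (hf.fderiv_right (by simp)).clm_apply contDiff_const

lemma contDiff_pdz (hf : ContDiff ℝ (⊤ : ℕ∞) f) : ContDiff ℝ (⊤ : ℕ∞) (pdz f) := by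
  have h : pdz f = fun p => fderiv ℝ f p (0, 1) := by
    funext p; exact (hasDerivAt_sliceZ hf p.1 p.2).deriv
  rw [h]
  exact (hf.fderiv_right (by simp)).clm_apply contDiff_const

lemma hasDerivAt_pdx (hf : ContDiff ℝ (⊤ : ℕ∞) f) (x z : ℝ) :
    HasDerivAt (fun t => f (t, z)) (pdx f (x, z)) x := by
  rw [pdx_eq hf]; exact hasDerivAt_sliceX hf x z

lemma hasDerivAt_pdz (hf : ContDiff ℝ (⊤ : ℕ∞) f) (x z : ℝ) :
    HasDerivAt (fun t => f (x, t)) (pdz f (x, z)) z := by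
  rw [pdz_eq hf]; exact hasDerivAt_sliceZ hf x z

lemma pdz_pdx_symm (hf : ContDiff ℝ (⊤ : ℕ∞) f) (x z : ℝ) :
    pdz (pdx f) (x, z) = pdx (pdz f) (x, z) := by
  have hΦ : ContDiff ℝ (⊤ : ℕ∞) (fderiv ℝ f) := hf.fderiv_right (by simp)
  have hΦd : ∀ p : ℝ × ℝ, HasFDerivAt (fderiv ℝ f) (fderiv ℝ (fderiv ℝ f) p) p :=
    fun p => (hΦ.differentiable (by simp) p).hasFDerivAt
  have hfd : ∀ p : ℝ × ℝ, HasFDerivAt f (fderiv ℝ f p) p :=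
    fun p => (hf.differentiable (by simp) p).hasFDerivAt
  have hsymm := second_derivative_symmetric hfd (hΦd (x, z))
  have e1 : pdx f = fun p => fderiv ℝ f p (1, 0) := by
    funext p; exact (hasDerivAt_sliceX hf p.1 p.2).deriv
  have e2 : pdz f = fun p => fderiv ℝ f p (0, 1) := by
    funext p; exact (hasDerivAt_sliceZ hf p.1 p.2).deriv
  have d1 : HasFDerivAt (fun p => fderiv ℝ f p ((1:ℝ), (0:ℝ)))
      (((fderiv ℝ (fderiv ℝ f) (x, z)).flip ((1:ℝ), (0:ℝ)))) (x, z) := by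
    simpa using (hΦd (x, z)).clm_apply (hasFDerivAt_const ((1:ℝ), (0:ℝ)) (x, z))
  have d2 : HasFDerivAt (fun p => fderiv ℝ f p ((0:ℝ), (1:ℝ)))
      (((fderiv ℝ (fderiv ℝ f) (x, z)).flip ((0:ℝ), (1:ℝ)))) (x, z) := by
    simpa using (hΦd (x, z)).clm_apply (hasFDerivAt_const ((0:ℝ), (1:ℝ)) (x, z))
  have hz : pdz (pdx f) (x, z) = fderiv ℝ (fderiv ℝ f) (x, z) (0, 1) (1, 0) := by
    rw [e1]
    exact (d1.comp_hasDerivAt z (HasDerivAt.prodMk (hasDerivAt_const z x) (hasDerivAt_id z))).deriv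
  have hx : pdx (pdz f) (x, z) = fderiv ℝ (fderiv ℝ f) (x, z) (1, 0) (0, 1) := by
    rw [e2]
    exact (d2.comp_hasDerivAt x (HasDerivAt.prodMk (hasDerivAt_id x) (hasDerivAt_const x z))).deriv
  rw [hz, hx, hsymm]

lemma per_pdz_x (hp : ∀ x z, f (x + 1, z) = f (x, z)) (x z : ℝ) :
    pdz f (x + 1, z) = pdz f (x, z) := by
  show deriv (fun t => f (x + 1, t)) z = deriv (fun t => f (x, t)) z
  congr 1; funext t; exact hp x t

lemma per_pdz_z (hp : ∀ x z, f (x, z + 1) = f (x, z)) (x z : ℝ) :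
    pdz f (x, z + 1) = pdz f (x, z) := by
  show deriv (fun t => f (x, t)) (z + 1) = deriv (fun t => f (x, t)) z
  have : (fun t => f (x, t + 1)) = fun t => f (x, t) := by funext t; exact hp x t
  rw [← deriv_comp_add_const (fun t => f (x, t)) 1 z]
  congr 1

lemma per_pdx_x (hp : ∀ x z, f (x + 1, z) = f (x, z)) (x z : ℝ) :
    pdx f (x + 1, z) = pdx f (x, z) := by
  show deriv (fun t => f (t, z)) (x + 1) = deriv (fun t => f (t, z)) x
  have : (fun t => f (t + 1, z)) = fun t => f (t, z) := by funext t; exact hp t z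
  rw [← deriv_comp_add_const (fun t => f (t, z)) 1 x]
  congr 1

lemma per_pdx_z (hp : ∀ x z, f (x, z + 1) = f (x, z)) (x z : ℝ) :
    pdx f (x, z + 1) = pdx f (x, z) := by
  show deriv (fun t => f (t, z + 1)) x = deriv (fun t => f (t, z)) x
  congr 1; funext t; exact hp t z

lemma integral_pdx_zero (hf : ContDiff ℝ (⊤ : ℕ∞) f)
    (hp : ∀ x z, f (x + 1, z) = f (x, z)) (z : ℝ) :
    ∫ x in (0:ℝ)..1, pdx f (x, z) = 0 := by
  have hcont : Continuous fun t : ℝ => pdx f (t, z) :=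
    (contDiff_pdx hf).continuous.comp (continuous_id.prodMk continuous_const)
  have h := intervalIntegral.integral_deriv_eq_sub'
    (a := 0) (b := 1) (fun t : ℝ => f (t, z)) (f' := fun t => pdx f (t, z))
    rfl
    (fun t _ => (hasDerivAt_sliceX hf t z).differentiableAt)
    hcont.continuousOn
  rw [h]
  have : f (1, z) = f (0, z) := by simpa using hp 0 z
  simp [this]

lemma integral_pdz_zero (hf : ContDiff ℝ (⊤ : ℕ∞) f)
    (hp : ∀ x z, f (x, z + 1) = f (x, z)) (x : ℝ) :
    ∫ z in (0:ℝ)..1, pdz f (x, z) = 0 := by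
  have hcont : Continuous fun t : ℝ => pdz f (x, t) :=
    (contDiff_pdz hf).continuous.comp (continuous_const.prodMk continuous_id)
  have h := intervalIntegral.integral_deriv_eq_sub'
    (a := 0) (b := 1) (fun t : ℝ => f (x, t)) (f' := fun t => pdz f (x, t))
    rfl
    (fun t _ => (hasDerivAt_sliceZ hf x t).differentiableAt)
    hcont.continuousOn
  rw [h]
  have : f (x, 1) = f (x, 0) := by simpa using hp x 0
  simp [this]

lemma swap_integrals {g : ℝ × ℝ → ℝ} (hg : Continuous g) :
    (∫ x in (0:ℝ)..1, ∫ z in (0:ℝ)..1, g (x, z)) =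
      ∫ z in (0:ℝ)..1, ∫ x in (0:ℝ)..1, g (x, z) := by
  simp_rw [intervalIntegral.integral_of_le (zero_le_one (α := ℝ))]
  apply MeasureTheory.integral_integral_swap
  have huncurry : Function.uncurry (fun x z => g (x, z)) = g := by
    funext p; simp [Function.uncurry]
  rw [huncurry, Measure.prod_restrict]
  have hcompact : IsCompact (Set.Icc (0:ℝ) 1 ×ˢ Set.Icc (0:ℝ) 1) :=
    isCompact_Icc.prod isCompact_Icc
  have : IntegrableOn g (Set.Icc (0:ℝ) 1 ×ˢ Set.Icc (0:ℝ) 1)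
      ((volume : Measure ℝ).prod volume) := by
    rw [← Measure.volume_eq_prod]
    exact hg.continuousOn.integrableOn_compact hcompact
  exact this.mono_set (Set.prod_mono Set.Ioc_subset_Icc_self Set.Ioc_subset_Icc_self)

end Helpers

theorem stmt9 (u w : ℝ × ℝ → ℝ)
    (hu : ContDiff ℝ (⊤ : ℕ∞) u) (hw : ContDiff ℝ (⊤ : ℕ∞) w)
    (hup : Per u) (hwp : Per w)
    (hdiv : DivFree u w) :
    (∫ x in (0:ℝ)..1, ∫ z in (0:ℝ)..1,
      (u (x, z) * pdx u (x, z) + w (x, z) * pdz u (x, z)) * pdz (pdz u) (x, z)) = 0 := by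
  -- the flux functions
  set A : ℝ × ℝ → ℝ := fun p => -(u p * (pdz u p) ^ 2) / 2 with hAdef
  set B : ℝ × ℝ → ℝ := fun p =>
    (u p * pdx u p + w p * pdz u p) * pdz u p - w p * (pdz u p) ^ 2 / 2 with hBdef
  have hux : ContDiff ℝ (⊤ : ℕ∞) (pdx u) := contDiff_pdx hu
  have huz : ContDiff ℝ (⊤ : ℕ∞) (pdz u) := contDiff_pdz hu
  have hA : ContDiff ℝ (⊤ : ℕ∞) A := ((hu.mul (huz.pow 2)).neg).div_const 2
  have hB : ContDiff ℝ (⊤ : ℕ∞) B :=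
    (((hu.mul hux).add (hw.mul huz)).mul huz).sub ((hw.mul (huz.pow 2)).div_const 2)
  -- periodicity of A and B
  have hApx : ∀ x z, A (x + 1, z) = A (x, z) := by
    intro x z
    simp only [hAdef, hup.1 x z, per_pdz_x hup.1 x z]
  have hBpz : ∀ x z, B (x, z + 1) = B (x, z) := by
    intro x z
    simp only [hBdef, hup.2 x z, hwp.2 x z, per_pdz_z hup.2 x z, per_pdx_z hup.2 x z]
  -- the pointwise divergence identity
  have key : ∀ x z : ℝ,
      (u (x, z) * pdx u (x, z) + w (x, z) * pdz u (x, z)) * pdz (pdz u) (x, z)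
        = pdx A (x, z) + pdz B (x, z) := by
    intro x z
    -- x-slice derivatives
    have du_x : HasDerivAt (fun t => u (t, z)) (pdx u (x, z)) x := hasDerivAt_pdx hu x z
    have duz_x : HasDerivAt (fun t => pdz u (t, z)) (pdx (pdz u) (x, z)) x :=
      hasDerivAt_pdx huz x z
    have hA_x : HasDerivAt (fun t => A (t, z))
        (-(pdx u (x, z) * pdz u (x, z) ^ 2 +
            u (x, z) * ((2 : ℕ) * pdz u (x, z) ^ 1 * pdx (pdz u) (x, z))) / 2) x :=
      ((du_x.mul (duz_x.pow 2)).neg).div_const 2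
    -- z-slice derivatives
    have du_z : HasDerivAt (fun t => u (x, t)) (pdz u (x, z)) z := hasDerivAt_pdz hu x z
    have dw_z : HasDerivAt (fun t => w (x, t)) (pdz w (x, z)) z := hasDerivAt_pdz hw x z
    have dux_z : HasDerivAt (fun t => pdx u (x, t)) (pdz (pdx u) (x, z)) z :=
      hasDerivAt_pdz hux x z
    have duz_z : HasDerivAt (fun t => pdz u (x, t)) (pdz (pdz u) (x, z)) z :=
      hasDerivAt_pdz huz x z
    have hB_z : HasDerivAt (fun t => B (x, t))
        (((pdz u (x, z) * pdx u (x, z) + u (x, z) * pdz (pdx u) (x, z) +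
            (pdz w (x, z) * pdz u (x, z) + w (x, z) * pdz (pdz u) (x, z))) * pdz u (x, z) +
          (u (x, z) * pdx u (x, z) + w (x, z) * pdz u (x, z)) * pdz (pdz u) (x, z)) -
          (pdz w (x, z) * pdz u (x, z) ^ 2 +
            w (x, z) * ((2 : ℕ) * pdz u (x, z) ^ 1 * pdz (pdz u) (x, z))) / 2) z :=
      (((du_z.mul dux_z).add (dw_z.mul duz_z)).mul duz_z).sub
        ((dw_z.mul (duz_z.pow 2)).div_const 2)
    have eA : pdx A (x, z) =
        -(pdx u (x, z) * pdz u (x, z) ^ 2 +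
            u (x, z) * ((2 : ℕ) * pdz u (x, z) ^ 1 * pdx (pdz u) (x, z))) / 2 := hA_x.deriv
    have eB : pdz B (x, z) =
        ((pdz u (x, z) * pdx u (x, z) + u (x, z) * pdz (pdx u) (x, z) +
            (pdz w (x, z) * pdz u (x, z) + w (x, z) * pdz (pdz u) (x, z))) * pdz u (x, z) +
          (u (x, z) * pdx u (x, z) + w (x, z) * pdz u (x, z)) * pdz (pdz u) (x, z)) -
          (pdz w (x, z) * pdz u (x, z) ^ 2 +
            w (x, z) * ((2 : ℕ) * pdz u (x, z) ^ 1 * pdz (pdz u) (x, z))) / 2 := hB_z.deriv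
    have hdw : pdz w (x, z) = -pdx u (x, z) := by
      have := hdiv (x, z); linarith
    have hsym : pdz (pdx u) (x, z) = pdx (pdz u) (x, z) := pdz_pdx_symm hu x z
    rw [eA, eB, hdw, hsym]
    push_cast
    ring
  -- integrability facts
  have hpdzB_cont : Continuous (pdz B) := (contDiff_pdz hB).continuous
  have hpdxA_cont : Continuous (pdx A) := (contDiff_pdx hA).continuous
  have step1 : ∀ x : ℝ,
      (∫ z in (0:ℝ)..1,
        (u (x, z) * pdx u (x, z) + w (x, z) * pdz u (x, z)) * pdz (pdz u) (x, z)) =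
      ∫ z in (0:ℝ)..1, pdx A (x, z) := by
    intro x
    have e : (∫ z in (0:ℝ)..1,
        (u (x, z) * pdx u (x, z) + w (x, z) * pdz u (x, z)) * pdz (pdz u) (x, z)) =
        ∫ z in (0:ℝ)..1, (pdx A (x, z) + pdz B (x, z)) := by
      apply intervalIntegral.integral_congr
      intro t _
      exact key x t
    have i1 : IntervalIntegrable (fun t => pdx A (x, t)) volume 0 1 :=
      (hpdxA_cont.comp (continuous_const.prodMk continuous_id)).intervalIntegrable 0 1
    have i2 : IntervalIntegrable (fun t => pdz B (x, t)) volume 0 1 :=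
      (hpdzB_cont.comp (continuous_const.prodMk continuous_id)).intervalIntegrable 0 1
    rw [e, intervalIntegral.integral_add i1 i2, integral_pdz_zero hB hBpz x, add_zero]
  have e2 : (∫ x in (0:ℝ)..1, ∫ z in (0:ℝ)..1,
      (u (x, z) * pdx u (x, z) + w (x, z) * pdz u (x, z)) * pdz (pdz u) (x, z)) =
      ∫ x in (0:ℝ)..1, ∫ z in (0:ℝ)..1, pdx A (x, z) := by
    apply intervalIntegral.integral_congr
    intro t _
    exact step1 t
  rw [e2, swap_integrals hpdxA_cont]
  have : ∀ z : ℝ, (∫ x in (0:ℝ)..1, pdx A (x, z)) = 0 := integral_pdx_zero hA hApx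
  simp [this]
end
end

section
/- Let C > 0, T > 0, and let Y : [0,T] → ℝ be a continuous function with Y(t) > 0 for all t ∈ [0,T] which satisfies the integral inequality Y(t) ≤ Y(0) + C ∫₀^t Y(s)³ ds for all t ∈ [0,T]. If T < 1/(2 C Y(0)²), then for every t ∈ [0,T] one has Y(t)² ≤ Y(0)² / (1 − 2 C Y(0)² t). -/
/-!
Bihari-type comparison. The majorant `Z t = Y 0 + C ∫₀ᵗ Y³` satisfies `Y ≤ Z`, hence
`Z' = C Y³ ≤ C Z³`, so `Z⁻² + 2 C t` is nondecreasing. This gives `Z t⁻² ≥ Y 0⁻² - 2 C t`,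
and `Y t² ≤ Z t²` is bounded by the inverse of the right-hand side.
-/

open MeasureTheory Set

theorem inv_sq_sub_le_inv_sq_of_deriv_le_mul_cube {Z Z' : ℝ → ℝ} {C a b : ℝ} (hab : a ≤ b)
    (hZc : ContinuousOn Z (Icc a b)) (hZd : ∀ u ∈ Ioo a b, HasDerivAt Z (Z' u) u)
    (hZpos : ∀ u ∈ Icc a b, 0 < Z u) (hZ' : ∀ u ∈ Ioo a b, Z' u ≤ C * Z u ^ 3) :
    (Z a ^ 2)⁻¹ - 2 * C * (b - a) ≤ (Z b ^ 2)⁻¹ := by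
  have hmono : MonotoneOn (fun u ↦ (Z u ^ 2)⁻¹ + 2 * C * u) (Icc a b) := by
    refine monotoneOn_of_hasDerivWithinAt_nonneg (convex_Icc a b)
      (((hZc.pow 2).inv₀ fun u hu ↦ (pow_pos (hZpos u hu) 2).ne').add
        (continuousOn_const.mul continuousOn_id))
      (f' := fun u ↦ -(2 * Z u * Z' u) / (Z u ^ 2) ^ 2 + 2 * C) ?_ ?_ <;>
      rw [interior_Icc] <;> intro u hu
    · have hZu := (hZpos u (Ioo_subset_Icc_self hu)).ne'
      refine HasDerivAt.hasDerivWithinAt ?_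
      convert (((hZd u hu).pow 2).inv (pow_ne_zero 2 hZu)).add
        ((hasDerivAt_id u).const_mul (2 * C)) using 1
      · ext; simp
      · simp
    · have hZu := hZpos u (Ioo_subset_Icc_self hu)
      rw [neg_div, neg_add_eq_sub, sub_nonneg, div_le_iff₀ (by positivity)]
      nlinarith [hZ' u hu]
  have hends := hmono (left_mem_Icc.2 hab) (right_mem_Icc.2 hab) hab
  linarith

theorem hasDerivAt_integral_of_continuousOn_Icc {f : ℝ → ℝ} {a b u : ℝ}
    (hf : ContinuousOn f (Icc a b)) (hu : u ∈ Ioo a b) :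
    HasDerivAt (fun s ↦ ∫ r in a..s, f r) (f u) u :=
  intervalIntegral.integral_hasDerivAt_right
    (hf.mono (by rw [uIcc_of_le hu.1.le]; exact Icc_subset_Icc_right hu.2.le)).intervalIntegrable
    (hf.mono Ioo_subset_Icc_self |>.stronglyMeasurableAtFilter isOpen_Ioo u hu)
    (hf.continuousAt (Icc_mem_nhds hu.1 hu.2))

theorem sq_le_div_of_le_add_integral_cube {Y : ℝ → ℝ} {C a b : ℝ} (hC : 0 ≤ C) (hab : a ≤ b)
    (hYc : ContinuousOn Y (Icc a b)) (hYpos : ∀ s ∈ Icc a b, 0 < Y s)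
    (hY : ∀ s ∈ Icc a b, Y s ≤ Y a + C * ∫ r in a..s, Y r ^ 3)
    (hsmall : 2 * C * Y a ^ 2 * (b - a) < 1) :
    Y b ^ 2 ≤ Y a ^ 2 / (1 - 2 * C * Y a ^ 2 * (b - a)) := by
  set Z : ℝ → ℝ := fun s ↦ Y a + C * ∫ r in a..s, Y r ^ 3 with hZ
  have hcube : ContinuousOn (fun r ↦ Y r ^ 3) (Icc a b) := hYc.pow 3
  have hZc : ContinuousOn Z (Icc a b) := by
    have := intervalIntegral.continuousOn_primitive_interval (μ := volume)
      (by rw [uIcc_of_le hab]; exact hcube.integrableOn_Icc)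
    rw [uIcc_of_le hab] at this
    exact continuousOn_const.add (continuousOn_const.mul this)
  have hZd (u) (hu : u ∈ Ioo a b) : HasDerivAt Z (C * Y u ^ 3) u :=
    ((hasDerivAt_integral_of_continuousOn_Icc hcube hu).const_mul C).const_add (Y a)
  have hZpos (s) (hs : s ∈ Icc a b) : 0 < Z s := (hYpos s hs).trans_le (hY s hs)
  have hZ' (u) (hu : u ∈ Ioo a b) : C * Y u ^ 3 ≤ C * Z u ^ 3 :=
    have hu := Ioo_subset_Icc_self hu
    mul_le_mul_of_nonneg_left (pow_le_pow_left₀ (hYpos u hu).le (hY u hu) 3) hC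
  have hZa : Z a = Y a := by simp [hZ]
  have hinv := inv_sq_sub_le_inv_sq_of_deriv_le_mul_cube hab hZc hZd hZpos hZ'
  rw [hZa] at hinv
  have hYa := hYpos a (left_mem_Icc.2 hab)
  have hb := right_mem_Icc.2 hab
  have hD : (Y a ^ 2)⁻¹ - 2 * C * (b - a) = (1 - 2 * C * Y a ^ 2 * (b - a)) / Y a ^ 2 := by
    field_simp
  calc Y b ^ 2 ≤ Z b ^ 2 := pow_le_pow_left₀ (hYpos b hb).le (hY b hb) 2
    _ = ((Z b ^ 2)⁻¹)⁻¹ := (inv_inv _).symm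
    _ ≤ ((Y a ^ 2)⁻¹ - 2 * C * (b - a))⁻¹ :=
      inv_anti₀ (hD ▸ div_pos (by linarith) (by positivity)) hinv
    _ = Y a ^ 2 / (1 - 2 * C * Y a ^ 2 * (b - a)) := by rw [hD, inv_div]

theorem stmt13_general (C T : ℝ) (hC : 0 < C) (Y : ℝ → ℝ)
    (hYc : ContinuousOn Y (Set.Icc 0 T))
    (hYpos : ∀ t ∈ Set.Icc (0:ℝ) T, 0 < Y t)
    (hY : ∀ t ∈ Set.Icc (0:ℝ) T, Y t ≤ Y 0 + C * ∫ s in (0:ℝ)..t, Y s ^ 3)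
    (hTsmall : T < 1 / (2 * C * Y 0 ^ 2)) :
    ∀ t ∈ Set.Icc (0:ℝ) T, Y t ^ 2 ≤ Y 0 ^ 2 / (1 - 2 * C * Y 0 ^ 2 * t) := by
  intro t ht
  have hsub : Icc 0 t ⊆ Icc 0 T := Icc_subset_Icc_right ht.2
  have hsmall : 2 * C * Y 0 ^ 2 * t < 1 := by
    have hY0 := hYpos 0 (left_mem_Icc.2 (ht.1.trans ht.2))
    calc 2 * C * Y 0 ^ 2 * t ≤ 2 * C * Y 0 ^ 2 * T := by gcongr; exact ht.2
      _ < 1 := by rwa [lt_div_iff₀' (by positivity)] at hTsmall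
  simpa using sq_le_div_of_le_add_integral_cube hC.le ht.1 (hYc.mono hsub)
    (fun s hs ↦ hYpos s (hsub hs)) (fun s hs ↦ hY s (hsub hs)) (by simpa using hsmall)

theorem stmt13 (C T : ℝ) (hC : 0 < C) (hT : 0 < T) (Y : ℝ → ℝ)
    (hYc : ContinuousOn Y (Set.Icc 0 T))
    (hYpos : ∀ t ∈ Set.Icc (0:ℝ) T, 0 < Y t)
    (hY : ∀ t ∈ Set.Icc (0:ℝ) T, Y t ≤ Y 0 + C * ∫ s in (0:ℝ)..t, Y s ^ 3)
    (hTsmall : T < 1 / (2 * C * Y 0 ^ 2)) :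
    ∀ t ∈ Set.Icc (0:ℝ) T, Y t ^ 2 ≤ Y 0 ^ 2 / (1 - 2 * C * Y 0 ^ 2 * t) :=
  stmt13_general C T hC Y hYc hYpos hY hTsmall
end

section
/- Let C > 0, T > 0, let K : [0,T] → ℝ be a nonnegative Lebesgue-integrable function, and let Y : [0,T] → ℝ be a continuous function with Y(t) > 0 for all t ∈ [0,T] which satisfies the integral inequality Y(t) ≤ Y(0) + C ∫₀^t K(s) Y(s)² ds for all t ∈ [0,T]. If C Y(0) ∫₀^T K(s) ds < 1, then for every t ∈ [0,T] one has Y(t) ≤ Y(0) / (1 − C Y(0) ∫₀^t K(s) ds). -/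
/-
Let `Z t = Y 0 + C ∫₀ᵗ K Y²` be the integral majorant, so `0 < Y ≤ Z`. `Z` is absolutely
continuous with `Z' = C K Y² ≤ C K Z²` a.e., hence `1 / Z + C ∫₀ᵗ K` is absolutely continuous
with a.e. nonnegative derivative, and therefore nondecreasing. This gives the Bihari-type bound
`1 / Z t ≥ 1 / Y 0 - C ∫₀ᵗ K`, whose right-hand side stays positive on `[0, T]` by the smallness
assumption; inverting it bounds `Z t`, and hence `Y t`.
-/

open MeasureTheory Set Filter

theorem LipschitzOnWith.comp_absolutelyContinuousOnInterval {X Z : Type*}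
    [PseudoMetricSpace X] [PseudoMetricSpace Z] {g : X → Z} {L : NNReal} {s : Set X}
    {f : ℝ → X} {a b : ℝ} (hg : LipschitzOnWith L g s)
    (hf : AbsolutelyContinuousOnInterval f a b) (hfs : MapsTo f (uIcc a b) s) :
    AbsolutelyContinuousOnInterval (g ∘ f) a b := by
  unfold AbsolutelyContinuousOnInterval at hf ⊢
  apply squeeze_zero' (Eventually.of_forall fun _ ↦ Finset.sum_nonneg fun _ _ ↦ dist_nonneg)
    _ (by simpa using hf.const_mul (L : ℝ))
  rw [eventually_inf_principal]
  filter_upwards with E hE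
  rw [Finset.mul_sum]
  gcongr with i hi
  exact hg.dist_le_mul _ (hfs (hE.1 i hi).1) _ (hfs (hE.1 i hi).2)

theorem lipschitzOnWith_inv_Ici {c : ℝ} (hc : 0 < c) :
    LipschitzOnWith (Real.toNNReal (c ^ 2)⁻¹) (fun x : ℝ ↦ x⁻¹) (Ici c) := by
  refine LipschitzOnWith.of_dist_le_mul fun x (hx : c ≤ x) y (hy : c ≤ y) ↦ ?_
  have hx0 : 0 < x := hc.trans_le hx
  have hy0 : 0 < y := hc.trans_le hy
  rw [Real.coe_toNNReal _ (by positivity), Real.dist_eq, Real.dist_eq,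
    inv_sub_inv hx0.ne' hy0.ne', abs_div, abs_of_pos (mul_pos hx0 hy0), abs_sub_comm,
    div_eq_inv_mul]
  gcongr
  nlinarith

namespace AbsolutelyContinuousOnInterval

variable {f : ℝ → ℝ} {a b : ℝ}

theorem inv {c : ℝ} (hf : AbsolutelyContinuousOnInterval f a b) (hc : 0 < c)
    (hfc : ∀ x ∈ uIcc a b, c ≤ f x) :
    AbsolutelyContinuousOnInterval (fun x ↦ (f x)⁻¹) a b :=
  (lipschitzOnWith_inv_Ici hc).comp_absolutelyContinuousOnInterval hf hfc

theorem le_of_ae_deriv_nonneg (hf : AbsolutelyContinuousOnInterval f a b) (hab : a ≤ b)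
    (hf' : ∀ᵐ x, x ∈ Icc a b → 0 ≤ deriv f x) : f a ≤ f b := by
  rw [← sub_nonneg, ← hf.integral_deriv_eq_sub]
  exact intervalIntegral.integral_nonneg_of_ae_restrict hab
    ((ae_restrict_iff' measurableSet_Icc).2 hf')

end AbsolutelyContinuousOnInterval

theorem inv_sub_integral_le_inv_of_le_add_integral_mul_sq {K Y : ℝ → ℝ} {C y₀ t : ℝ}
    (hC : 0 ≤ C) (hy₀ : 0 < y₀) (ht : 0 ≤ t) (hK : IntegrableOn K (Icc 0 t))
    (hKnn : ∀ s ∈ Icc 0 t, 0 ≤ K s) (hYc : ContinuousOn Y (Icc 0 t))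
    (hYnn : ∀ s ∈ Icc 0 t, 0 ≤ Y s)
    (hY : ∀ s ∈ Icc 0 t, Y s ≤ y₀ + C * ∫ u in (0:ℝ)..s, K u * Y u ^ 2) :
    y₀⁻¹ - C * ∫ s in (0:ℝ)..t, K s ≤ (y₀ + C * ∫ s in (0:ℝ)..t, K s * Y s ^ 2)⁻¹ := by
  set Z : ℝ → ℝ := fun s ↦ y₀ + C * ∫ u in (0:ℝ)..s, K u * Y u ^ 2
  have hKi : IntervalIntegrable K volume 0 t :=
    (intervalIntegrable_iff_integrableOn_Icc_of_le ht).2 hK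
  have hKYi : IntervalIntegrable (fun s ↦ K s * Y s ^ 2) volume 0 t :=
    (intervalIntegrable_iff_integrableOn_Icc_of_le ht).2
      (hK.mul_continuousOn (hYc.pow 2) isCompact_Icc)
  have hZ : ∀ s ∈ uIcc 0 t, y₀ ≤ Z s := fun s hs ↦ by
    rw [uIcc_of_le ht] at hs
    refine le_add_of_nonneg_right (mul_nonneg hC (intervalIntegral.integral_nonneg hs.1 ?_))
    exact fun u hu ↦ mul_nonneg (hKnn u ⟨hu.1, hu.2.trans hs.2⟩) (sq_nonneg _)
  have hZac : AbsolutelyContinuousOnInterval Z 0 t :=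
    (LipschitzWith.const y₀).lipschitzOnWith.absolutelyContinuousOnInterval.add
      ((hKYi.absolutelyContinuousOnInterval_intervalIntegral left_mem_uIcc).const_mul C)
  have hGac := (hZac.inv hy₀ hZ).add
    ((hKi.absolutelyContinuousOnInterval_intervalIntegral left_mem_uIcc).const_mul C)
  have hG' : ∀ᵐ x, x ∈ Icc 0 t →
      0 ≤ deriv ((fun x ↦ (Z x)⁻¹) + fun x ↦ C * ∫ v in (0:ℝ)..x, K v) x := by
    filter_upwards [hKi.ae_hasDerivAt_integral, hKYi.ae_hasDerivAt_integral] with x hKx hKYx hx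
    have hx' : x ∈ uIcc 0 t := by rwa [uIcc_of_le ht]
    have hZx : 0 < Z x := hy₀.trans_le (hZ x hx')
    have hZd : HasDerivAt Z (C * (K x * Y x ^ 2)) x :=
      ((hKYx hx' 0 left_mem_uIcc).const_mul C).const_add y₀
    have hGd : HasDerivAt ((fun x ↦ (Z x)⁻¹) + fun x ↦ C * ∫ v in (0:ℝ)..x, K v)
        (-(C * (K x * Y x ^ 2)) / Z x ^ 2 + C * K x) x :=
      (hZd.inv hZx.ne').add ((hKx hx' 0 left_mem_uIcc).const_mul C)
    have hYZ : Y x ^ 2 ≤ Z x ^ 2 := pow_le_pow_left₀ (hYnn x hx) (hY x hx) 2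
    rw [hGd.deriv, neg_div, neg_add_eq_sub, sub_nonneg, div_le_iff₀ (by positivity)]
    nlinarith [mul_nonneg hC (hKnn x hx)]
  simpa [Z] using hGac.le_of_ae_deriv_nonneg ht hG'

theorem stmt15_general (C T : ℝ) (hC : 0 < C) (K Y : ℝ → ℝ)
    (hKint : IntegrableOn K (Set.Icc 0 T))
    (hKnn : ∀ t ∈ Set.Icc (0:ℝ) T, 0 ≤ K t)
    (hYc : ContinuousOn Y (Set.Icc 0 T))
    (hYpos : ∀ t ∈ Set.Icc (0:ℝ) T, 0 < Y t)
    (hY : ∀ t ∈ Set.Icc (0:ℝ) T, Y t ≤ Y 0 + C * ∫ s in (0:ℝ)..t, K s * Y s ^ 2)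
    (hsmall : C * Y 0 * (∫ s in (0:ℝ)..T, K s) < 1) :
    ∀ t ∈ Set.Icc (0:ℝ) T, Y t ≤ Y 0 / (1 - C * Y 0 * ∫ s in (0:ℝ)..t, K s) := by
  intro t ht
  have hsub : Icc 0 t ⊆ Icc 0 T := Icc_subset_Icc_right ht.2
  have hY₀ : 0 < Y 0 := hYpos 0 ⟨le_rfl, ht.1.trans ht.2⟩
  have hbihari := inv_sub_integral_le_inv_of_le_add_integral_mul_sq hC.le hY₀ ht.1
    (hKint.mono_set hsub) (fun s hs ↦ hKnn s (hsub hs)) (hYc.mono hsub)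
    (fun s hs ↦ (hYpos s (hsub hs)).le) (fun s hs ↦ hY s (hsub hs))
  have hKtT : ∫ s in (0:ℝ)..t, K s ≤ ∫ s in (0:ℝ)..T, K s :=
    intervalIntegral.integral_mono_interval le_rfl ht.1 ht.2
      ((ae_restrict_iff' measurableSet_Ioc).2
        (.of_forall fun s hs ↦ hKnn s (Ioc_subset_Icc_self hs)))
      ((intervalIntegrable_iff_integrableOn_Icc_of_le (ht.1.trans ht.2)).2 hKint)
  have hden : 0 < 1 - C * Y 0 * ∫ s in (0:ℝ)..t, K s := by nlinarith [mul_pos hC hY₀]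
  have hlower : (Y 0)⁻¹ - C * ∫ s in (0:ℝ)..t, K s =
      (1 - C * Y 0 * ∫ s in (0:ℝ)..t, K s) / Y 0 := by
    field_simp
  calc Y t ≤ Y 0 + C * ∫ s in (0:ℝ)..t, K s * Y s ^ 2 := hY t ht
    _ ≤ ((Y 0)⁻¹ - C * ∫ s in (0:ℝ)..t, K s)⁻¹ :=
      (le_inv_comm₀ (hlower ▸ div_pos hden hY₀) ((hYpos t ht).trans_le (hY t ht))).1 hbihari
    _ = Y 0 / (1 - C * Y 0 * ∫ s in (0:ℝ)..t, K s) := by rw [hlower, inv_div]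

theorem stmt15 (C T : ℝ) (hC : 0 < C) (hT : 0 < T) (K Y : ℝ → ℝ)
    (hKint : IntegrableOn K (Set.Icc 0 T))
    (hKnn : ∀ t ∈ Set.Icc (0:ℝ) T, 0 ≤ K t)
    (hYc : ContinuousOn Y (Set.Icc 0 T))
    (hYpos : ∀ t ∈ Set.Icc (0:ℝ) T, 0 < Y t)
    (hY : ∀ t ∈ Set.Icc (0:ℝ) T, Y t ≤ Y 0 + C * ∫ s in (0:ℝ)..t, K s * Y s ^ 2)
    (hsmall : C * Y 0 * (∫ s in (0:ℝ)..T, K s) < 1) :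
    ∀ t ∈ Set.Icc (0:ℝ) T, Y t ≤ Y 0 / (1 - C * Y 0 * ∫ s in (0:ℝ)..t, K s) :=
  stmt15_general C T hC K Y hKint hKnn hYc hYpos hY hsmall
end

section
/- Let m > 0 and let Y : [0,∞) → ℝ be differentiable at every point, with Y(0) < m. Suppose that for every t ≥ 0, if Y(t) < m then Y′(t) ≤ 0. Then Y(t) ≤ Y(0) for all t ≥ 0 (and in particular Y(t) < m for all t ≥ 0). -/
/-!
Let `T` be the first time `Y` reaches `m`. Before `T` the derivative of `Y` is nonpositive, so
`Y` is antitone on `[0, T]` and `Y T ≤ Y 0 < m`, a contradiction. Hence `Y < m` throughout, the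
derivative is nonpositive everywhere, and `Y` is antitone on `[0, ∞)`.
-/

open Set

section

variable {f f' : ℝ → ℝ} {s D : Set ℝ}

theorem antitoneOn_of_hasDerivWithinAt_nonpos_of_subset (hD : Convex ℝ D) (hDs : D ⊆ s)
    (hf : ∀ x ∈ s, HasDerivWithinAt f (f' x) s x) (hf' : ∀ x ∈ interior D, f' x ≤ 0) :
    AntitoneOn f D :=
  antitoneOn_of_hasDerivWithinAt_nonpos hD
    (fun x hx ↦ ((hf x (hDs hx)).continuousWithinAt).mono hDs)
    (fun x hx ↦ (hf x (hDs (interior_subset hx))).mono (interior_subset.trans hDs)) hf'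

variable {a m : ℝ}

theorem forall_lt_of_hasDerivWithinAt_nonpos_of_lt
    (hf : ∀ x ∈ Ici a, HasDerivWithinAt f (f' x) (Ici a) x) (ha : f a < m)
    (hf' : ∀ x ∈ Ioi a, f x < m → f' x ≤ 0) : ∀ x ∈ Ici a, f x < m := by
  by_contra! ⟨x, hx, hmx⟩
  set A := Ici a ∩ f ⁻¹' Ici m
  have hA : IsClosed A :=
    ContinuousOn.preimage_isClosed_of_isClosed (fun x hx ↦ (hf x hx).continuousWithinAt)
      isClosed_Ici isClosed_Ici
  obtain ⟨⟨haT, hmT⟩, hT⟩ := hA.isLeast_csInf ⟨x, hx, hmx⟩ ⟨a, fun _ hy ↦ hy.1⟩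
  have hbelow : ∀ y ∈ Ioo a (sInf A), f y < m := fun y hy ↦
    not_le.1 fun hmy ↦ (hy.2.trans_le (hT ⟨hy.1.le, hmy⟩)).false
  have hanti : AntitoneOn f (Icc a (sInf A)) :=
    antitoneOn_of_hasDerivWithinAt_nonpos_of_subset (convex_Icc _ _) Icc_subset_Ici_self hf
      fun y hy ↦ by
        rw [interior_Icc] at hy
        exact hf' y hy.1 (hbelow y hy)
  have := hanti (left_mem_Icc.2 haT) (right_mem_Icc.2 haT) haT
  exact (hmT.trans this).not_gt ha

theorem antitoneOn_Ici_of_hasDerivWithinAt_nonpos_of_lt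
    (hf : ∀ x ∈ Ici a, HasDerivWithinAt f (f' x) (Ici a) x) (ha : f a < m)
    (hf' : ∀ x ∈ Ioi a, f x < m → f' x ≤ 0) : AntitoneOn f (Ici a) := by
  have hlt := forall_lt_of_hasDerivWithinAt_nonpos_of_lt hf ha hf'
  refine antitoneOn_of_hasDerivWithinAt_nonpos_of_subset (convex_Ici a) subset_rfl hf
    fun x hx ↦ ?_
  rw [interior_Ici] at hx
  exact hf' x hx (hlt x (mem_Ici_of_Ioi hx))

end

theorem stmt16_general (m : ℝ) (Y Y' : ℝ → ℝ)
    (hY : ∀ t ∈ Set.Ici (0:ℝ), HasDerivWithinAt Y (Y' t) (Set.Ici 0) t)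
    (h0 : Y 0 < m)
    (hdec : ∀ t ∈ Set.Ici (0:ℝ), Y t < m → Y' t ≤ 0) :
    ∀ t ∈ Set.Ici (0:ℝ), Y t ≤ Y 0 ∧ Y t < m := by
  have hdec' : ∀ t ∈ Ioi (0:ℝ), Y t < m → Y' t ≤ 0 := fun t ht ↦ hdec t (mem_Ici_of_Ioi ht)
  have hanti := antitoneOn_Ici_of_hasDerivWithinAt_nonpos_of_lt hY h0 hdec'
  exact fun t ht ↦ ⟨hanti self_mem_Ici ht ht,
    forall_lt_of_hasDerivWithinAt_nonpos_of_lt hY h0 hdec' t ht⟩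

theorem stmt16 (m : ℝ) (hm : 0 < m) (Y Y' : ℝ → ℝ)
    (hY : ∀ t ∈ Set.Ici (0:ℝ), HasDerivWithinAt Y (Y' t) (Set.Ici 0) t)
    (h0 : Y 0 < m)
    (hdec : ∀ t ∈ Set.Ici (0:ℝ), Y t < m → Y' t ≤ 0) :
    ∀ t ∈ Set.Ici (0:ℝ), Y t ≤ Y 0 ∧ Y t < m :=
  stmt16_general m Y Y' hY h0 hdec
end

section
/- (Aubin–Lions lemma, part (i).) Let X, B, Y be Banach spaces, let i : X → B be an injective compact linear operator (i.e. a continuous linear map sending bounded subsets of X to relatively compact subsets of B), and let j : B → Y be an injective continuous linear operator. Let T > 0 and 1 ≤ p < ∞. Let 𝓕 be a family of strongly measurable functions f : [0,T] → X such that: (a) sup_{f ∈ 𝓕} ∫₀^T ‖f(t)‖_X^p dt < ∞; and (b) for every f ∈ 𝓕 there exists a Bochner-integrable function g_f : [0,T] → Y with j(i(f(t))) = j(i(f(0))) + ∫₀^t g_f(s) ds for all t ∈ [0,T], and sup_{f ∈ 𝓕} ∫₀^T ‖g_f(t)‖_Y dt < ∞. Then the family { i ∘ f : f ∈ 𝓕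 } is relatively compact in the space L^p(0,T; B) of p-integrable B-valued functions. -/
/-!
By Ehrling's inequality (compactness of `i`, injectivity of `j`), for every `η > 0` there is `C`
with `‖i x‖ ≤ η ‖x‖ + C ‖j (i x)‖`. Let `P f` be the step function whose value on each cell of a
uniform grid of mesh `δ` in `[0, T]` is the average of `f` over the cell. On a cell, `∫ ‖g‖` over
the cell bounds the oscillation of `j ∘ i ∘ f`, so pointwise
`‖i (f - P f)‖ ≤ η ‖f - P f‖ + C ∫_cell ‖g‖`. Averaging is an `L^p` contraction (Jensen), and the
step function `∫_cell ‖g‖` has `L^p` norm at most `δ ^ (1 / p) ∫₀ᵀ ‖g‖`; choosing `η`, then `δ`,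
makes `i ∘ f` uniformly close to `i ∘ P f`. The values of `P f` stay in a fixed ball of `X`, so the
functions `i ∘ P f` range over a compact subset of `L^p`.
-/

open MeasureTheory
open scoped ENNReal

open Set Filter Topology Metric Function

theorem Metric.totallyBounded_of_forall_subset_thickening {α : Type*} [PseudoMetricSpace α]
    {s : Set α} (h : ∀ ε > 0, ∃ t, TotallyBounded t ∧ s ⊆ thickening ε t) : TotallyBounded s := by
  refine Metric.totallyBounded_iff.2 fun ε hε => ?_
  obtain ⟨t, ht, hst⟩ := h (ε / 2) (half_pos hε)
  obtain ⟨F, hF, htF⟩ := Metric.totallyBounded_iff.1 ht (ε / 2) (half_pos hε)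
  refine ⟨F, hF, fun x hx => ?_⟩
  obtain ⟨y, hy, hxy⟩ := mem_thickening_iff.1 (hst hx)
  obtain ⟨z, hz, hyz⟩ := mem_iUnion₂.1 (htF hy)
  exact mem_iUnion₂.2 ⟨z, hz, mem_ball.2 (by linarith [dist_triangle x y z, mem_ball.1 hyz])⟩

theorem ENNReal.exists_pos_mul_ofReal_lt {c b : ℝ≥0∞} (hc : c ≠ ∞) (hb : b ≠ 0) :
    ∃ η : ℝ, 0 < η ∧ c * ENNReal.ofReal η < b := by
  obtain ⟨η, hη, hηc⟩ := ENNReal.exists_nnreal_pos_mul_lt hc hb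
  exact ⟨η, hη, by rwa [ENNReal.ofReal_coe_nnreal, mul_comm]⟩

theorem ENNReal.exists_pos_nat_mul_ofReal_div_rpow_lt {c b : ℝ≥0∞} (hc : c ≠ ∞) (hb : b ≠ 0)
    (T : ℝ) {r : ℝ} (hr : 0 < r) : ∃ m : ℕ, 0 < m ∧ c * ENNReal.ofReal (T / m) ^ r < b := by
  have h0 := ENNReal.tendsto_ofReal (tendsto_const_div_atTop_nhds_zero_nat T)
  rw [ENNReal.ofReal_zero] at h0
  have hlim := ENNReal.Tendsto.const_mul (((ENNReal.continuous_rpow_const (y := r)).tendsto 0).comp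
    h0) (Or.inr hc)
  rw [ENNReal.zero_rpow_of_pos hr, mul_zero] at hlim
  exact ((eventually_gt_atTop 0).and (hlim.eventually (gt_mem_nhds (pos_iff_ne_zero.2 hb)))).exists

theorem IsCompactOperator.exists_norm_le_mul_norm_add_mul_norm_comp
    {X B Y : Type*} [NormedAddCommGroup X] [NormedSpace ℝ X] [NormedAddCommGroup B]
    [NormedSpace ℝ B] [NormedAddCommGroup Y] [NormedSpace ℝ Y]
    {i : X →L[ℝ] B} (hi : IsCompactOperator i) {j : B →L[ℝ] Y} (hj : Function.Injective j)
    {η : ℝ} (hη : 0 < η) :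
    ∃ C, 0 ≤ C ∧ ∀ x, ‖i x‖ ≤ η * ‖x‖ + C * ‖j (i x)‖ := by
  -- `K` is compact and avoids `0`, so by injectivity of `j`, `‖j ·‖` is bounded below on it.
  set K := closure (i '' closedBall 0 1) ∩ {b | η ≤ ‖b‖}
  have hK : IsCompact K :=
    (hi.isCompact_closure_image_closedBall (f := (i : X →ₗ[ℝ] B)) 1).inter_right
      (isClosed_le continuous_const continuous_norm)
  obtain ⟨a, ha, haK⟩ := hK.exists_forall_le' (f := fun b => ‖j b‖) (a := 0)
    (continuous_norm.comp j.continuous).continuousOn fun b hb => norm_pos_iff.2 fun hjb =>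
      (hη.trans_le hb.2).ne' (by rw [hj (hjb.trans j.map_zero.symm), norm_zero])
  have hball : ∀ u ∈ closedBall (0 : X) 1, ‖i u‖ ≤ η + ‖i‖ / a * ‖j (i u)‖ := by
    intro u hu
    by_cases hiu : η ≤ ‖i u‖
    · have hju : a ≤ ‖j (i u)‖ := haK _ ⟨subset_closure (mem_image_of_mem _ hu), hiu⟩
      have hiu' : ‖i u‖ ≤ ‖i‖ :=
        (i.le_opNorm u).trans
          (mul_le_of_le_one_right (norm_nonneg i) (mem_closedBall_zero_iff.1 hu))
      have : ‖i‖ ≤ ‖i‖ / a * ‖j (i u)‖ := by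
        rw [div_mul_eq_mul_div, le_div_iff₀ ha]
        exact mul_le_mul_of_nonneg_left hju (norm_nonneg i)
      linarith
    · have : 0 ≤ ‖i‖ / a * ‖j (i u)‖ := by positivity
      linarith
  refine ⟨‖i‖ / a, by positivity, fun x => ?_⟩
  rcases eq_or_ne x 0 with rfl | hx
  · simp
  have hu := hball (‖x‖⁻¹ • x) (by simp [norm_smul, hx])
  simp only [map_smul, norm_smul, norm_inv, norm_norm] at hu
  calc ‖i x‖ = ‖x‖ * (‖x‖⁻¹ * ‖i x‖) := by field_simp
    _ ≤ ‖x‖ * (η + ‖i‖ / a * (‖x‖⁻¹ * ‖j (i x)‖)) := by gcongr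
    _ = η * ‖x‖ + ‖i‖ / a * ‖j (i x)‖ := by field_simp

namespace MeasureTheory

variable {α ι E : Type*} [Fintype ι] {I : ι → Set α}

noncomputable def piecewiseConst {M : Type*} [AddCommMonoid M] (I : ι → Set α) (d : ι → M)
    (t : α) : M :=
  ∑ k, (I k).indicator (fun _ => d k) t

section AddCommMonoid

variable {M N : Type*} [AddCommMonoid M] [AddCommMonoid N]

theorem piecewiseConst_apply_of_mem (hI : Pairwise (Disjoint on I)) (d : ι → M) {k : ι} {t : α}
    (ht : t ∈ I k) : piecewiseConst I d t = d k := by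
  rw [piecewiseConst, Finset.sum_eq_single k (fun l _ hlk => indicator_of_notMem
    (Set.disjoint_left.1 (hI hlk.symm) ht) _) (by simp), indicator_of_mem ht]

theorem comp_piecewiseConst (hI : Pairwise (Disjoint on I)) {φ : M → N} (hφ : φ 0 = 0)
    (d : ι → M) (t : α) : φ (piecewiseConst I d t) = piecewiseConst I (φ ∘ d) t := by
  by_cases ht : ∃ k, t ∈ I k
  · obtain ⟨k, hk⟩ := ht
    rw [piecewiseConst_apply_of_mem hI _ hk, piecewiseConst_apply_of_mem hI _ hk, comp_apply]
  · push Not at ht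
    simp [piecewiseConst, indicator_of_notMem (ht _), hφ]

theorem stronglyMeasurable_piecewiseConst [MeasurableSpace α] [TopologicalSpace M]
    [ContinuousAdd M] (hIm : ∀ k, MeasurableSet (I k)) (d : ι → M) :
    StronglyMeasurable (piecewiseConst I d) := by
  unfold piecewiseConst
  exact Finset.stronglyMeasurable_fun_sum _ fun k _ => stronglyMeasurable_const.indicator (hIm k)

end AddCommMonoid

variable [MeasurableSpace α] {μ : Measure α} {p : ℝ≥0∞}

theorem lintegral_piecewiseConst (hIm : ∀ k, MeasurableSet (I k)) (d : ι → ℝ≥0∞) :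
    ∫⁻ t, piecewiseConst I d t ∂μ = ∑ k, d k * μ (I k) := by
  simp only [piecewiseConst]
  rw [lintegral_finsetSum _ fun k _ => measurable_const.indicator (hIm k)]
  simp [lintegral_indicator_const (hIm _)]

theorem sum_setLIntegral_le_lintegral (hI : Pairwise (Disjoint on I))
    (hIm : ∀ k, MeasurableSet (I k)) (F : α → ℝ≥0∞) :
    ∑ k, ∫⁻ t in I k, F t ∂μ ≤ ∫⁻ t, F t ∂μ := by
  calc ∑ k, ∫⁻ t in I k, F t ∂μ = ∫⁻ t in ⋃ k, I k, F t ∂μ :=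
        ((lintegral_iUnion hIm hI F).trans (tsum_fintype _)).symm
    _ ≤ ∫⁻ t, F t ∂μ := setLIntegral_le_lintegral _ _

variable [NormedAddCommGroup E]

theorem eLpNorm_piecewiseConst_le (hIm : ∀ k, MeasurableSet (I k)) (d : ι → E) (hp : 1 ≤ p) :
    eLpNorm (piecewiseConst I d) p μ ≤ ∑ k, ‖d k‖ₑ * μ (I k) ^ (1 / p.toReal) := by
  have : piecewiseConst I d = ∑ k, (I k).indicator (fun _ => d k) := by
    ext t; simp [piecewiseConst]
  rw [this]
  refine (eLpNorm_sum_le (fun k _ =>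
    (stronglyMeasurable_const.indicator (hIm k)).aestronglyMeasurable) hp).trans ?_
  exact Finset.sum_le_sum fun k _ => eLpNorm_indicator_const_le _ _

theorem eLpNorm_piecewiseConst_setIntegral_norm_le (hI : Pairwise (Disjoint on I))
    (hIm : ∀ k, MeasurableSet (I k)) {δ : ℝ≥0∞} (hδ : ∀ k, μ (I k) ≤ δ) {g : α → E}
    (hg : Integrable g μ) (hp : 1 ≤ p) :
    eLpNorm (piecewiseConst I fun k => ∫ x in I k, ‖g x‖ ∂μ) p μ
      ≤ ENNReal.ofReal (∫ x, ‖g x‖ ∂μ) * δ ^ (1 / p.toReal) := by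
  have hG : ∀ k, ‖∫ x in I k, ‖g x‖ ∂μ‖ₑ = ∫⁻ x in I k, ‖g x‖ₑ ∂μ := fun k => by
    rw [Real.enorm_of_nonneg (integral_nonneg fun _ => norm_nonneg _),
      ofReal_integral_norm_eq_lintegral_enorm hg.integrableOn]
  calc eLpNorm (piecewiseConst I fun k => ∫ x in I k, ‖g x‖ ∂μ) p μ
      ≤ ∑ k, ‖∫ x in I k, ‖g x‖ ∂μ‖ₑ * μ (I k) ^ (1 / p.toReal) :=
        eLpNorm_piecewiseConst_le hIm _ hp
    _ ≤ ∑ k, (∫⁻ x in I k, ‖g x‖ₑ ∂μ) * δ ^ (1 / p.toReal) := by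
        gcongr with k
        · exact (hG k).le
        · exact hδ k
    _ ≤ ENNReal.ofReal (∫ x, ‖g x‖ ∂μ) * δ ^ (1 / p.toReal) := by
        rw [← Finset.sum_mul, ofReal_integral_norm_eq_lintegral_enorm hg]
        gcongr
        exact sum_setLIntegral_le_lintegral hI hIm _

section Lp

theorem continuous_indicatorConstLp [Fact (1 ≤ p)] {s : Set α} (hs : MeasurableSet s)
    (hμs : μ s ≠ ∞) : Continuous (indicatorConstLp (E := E) p hs hμs) :=
  AddMonoidHomClass.continuous_of_bound
    (AddMonoidHom.mk' (indicatorConstLp p hs hμs) fun _ _ => indicatorConstLp_add.symm)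
    (μ.real s ^ (1 / p.toReal))
    fun _ => (norm_indicatorConstLp_le (hs := hs) (hμs := hμs)).trans_eq (mul_comm _ _)

variable [IsFiniteMeasure μ]

noncomputable def piecewiseConstLp (p : ℝ≥0∞) (μ : Measure α) [IsFiniteMeasure μ]
    (hIm : ∀ k, MeasurableSet (I k)) (d : ι → E) : Lp E p μ :=
  ∑ k, indicatorConstLp p (hIm k) (measure_ne_top μ (I k)) (d k)

theorem coeFn_piecewiseConstLp (hIm : ∀ k, MeasurableSet (I k)) (d : ι → E) :
    piecewiseConstLp p μ hIm d =ᵐ[μ] piecewiseConst I d := by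
  filter_upwards [Lp.coeFn_fun_finsetSum Finset.univ
    fun k => indicatorConstLp p (hIm k) (measure_ne_top μ (I k)) (d k),
    ae_all_iff.2 fun k => indicatorConstLp_coeFn (p := p) (hs := hIm k)
      (hμs := measure_ne_top μ (I k)) (c := d k)] with t ht hk
  simp only [piecewiseConstLp, ht, piecewiseConst, hk]

theorem continuous_piecewiseConstLp [Fact (1 ≤ p)] (hIm : ∀ k, MeasurableSet (I k)) :
    Continuous (piecewiseConstLp (E := E) p μ hIm) :=
  continuous_finsetSum _ fun k _ => (continuous_indicatorConstLp _ _).comp (continuous_apply k)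

end Lp

variable [NormedSpace ℝ E] [CompleteSpace E]

theorem enorm_setAverage_mul_rpow_le_eLpNorm (f : α → E) (hp : 1 ≤ p) (s : Set α) :
    ‖⨍ x in s, f x ∂μ‖ₑ * μ s ^ (1 / p.toReal) ≤ eLpNorm f p (μ.restrict s) := by
  rcases eq_zero_or_neZero (μ.restrict s) with hμs | hμs
  · simp [hμs]
  -- The constant function `⨍ f` is the conditional expectation of `f` given the trivial σ-algebra.
  calc ‖⨍ x in s, f x ∂μ‖ₑ * μ s ^ (1 / p.toReal)
      = eLpNorm (fun _ => ⨍ x in s, f x ∂μ) p (μ.restrict s) := by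
        rw [eLpNorm_const _ (zero_lt_one.trans_le hp).ne' hμs.out, Measure.restrict_apply_univ]
    _ = eLpNorm ((μ.restrict s)[f | ⊥]) p (μ.restrict s) :=
        eLpNorm_congr_ae (by simpa only [average_eq] using (condExp_bot_ae_eq f).symm)
    _ ≤ eLpNorm f p (μ.restrict s) := eLpNorm_condExp_le_eLpNorm f hp

theorem norm_setAverage_le_of_eLpNorm_le {f : α → E} (hp : 1 ≤ p) {s : Set α} (hs0 : μ s ≠ 0)
    (hs : μ s ≠ ∞) {M : ℝ≥0∞} (hM : eLpNorm f p (μ.restrict s) ≤ M) (hM' : M ≠ ∞) :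
    ‖⨍ x in s, f x ∂μ‖ ≤ (M / μ s ^ (1 / p.toReal)).toReal := by
  rw [← toReal_enorm]
  have hs0' := (ENNReal.rpow_pos (p := 1 / p.toReal) (pos_iff_ne_zero.2 hs0) hs).ne'
  refine ENNReal.toReal_mono (ENNReal.div_ne_top hM' hs0') ?_
  rw [ENNReal.le_div_iff_mul_le (Or.inl hs0')
    (Or.inl (ENNReal.rpow_ne_top_of_nonneg (by positivity) hs))]
  exact (enorm_setAverage_mul_rpow_le_eLpNorm f hp s).trans hM

theorem eLpNorm_piecewiseConst_setAverage_le (hI : Pairwise (Disjoint on I))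
    (hIm : ∀ k, MeasurableSet (I k)) (f : α → E) (hp : 1 ≤ p) (hp' : p ≠ ∞) :
    eLpNorm (piecewiseConst I fun k => ⨍ x in I k, f x ∂μ) p μ ≤ eLpNorm f p μ := by
  have hp0 : 0 < p.toReal := ENNReal.toReal_pos (zero_lt_one.trans_le hp).ne' hp'
  have hpow : ∀ (g : α → E) ν, eLpNorm g p ν ^ p.toReal = ∫⁻ x, ‖g x‖ₑ ^ p.toReal ∂ν :=
    fun g ν => by
      rw [eLpNorm_eq_lintegral_rpow_enorm_toReal (zero_lt_one.trans_le hp).ne' hp', one_div,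
        ENNReal.rpow_inv_rpow hp0.ne']
  rw [← ENNReal.rpow_le_rpow_iff hp0, hpow, hpow]
  calc ∫⁻ t, ‖piecewiseConst I (fun k => ⨍ x in I k, f x ∂μ) t‖ₑ ^ p.toReal ∂μ
      = ∑ k, ‖⨍ x in I k, f x ∂μ‖ₑ ^ p.toReal * μ (I k) := by
        simp_rw [comp_piecewiseConst hI (φ := fun v : E => ‖v‖ₑ ^ p.toReal)
          (by simp [ENNReal.zero_rpow_of_pos hp0])]
        exact lintegral_piecewiseConst hIm _
    _ = ∑ k, (‖⨍ x in I k, f x ∂μ‖ₑ * μ (I k) ^ (1 / p.toReal)) ^ p.toReal := by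
        simp_rw [ENNReal.mul_rpow_of_nonneg _ _ hp0.le, one_div, ENNReal.rpow_inv_rpow hp0.ne']
    _ ≤ ∑ k, eLpNorm f p (μ.restrict (I k)) ^ p.toReal := by
        gcongr with k
        exact enorm_setAverage_mul_rpow_le_eLpNorm f hp _
    _ ≤ ∫⁻ x, ‖f x‖ₑ ^ p.toReal ∂μ := by
        simp_rw [hpow]
        exact sum_setLIntegral_le_lintegral hI hIm _

theorem norm_sub_setAverage_le {F : α → E} {s : Set α} (hs : MeasurableSet s) (h0 : μ s ≠ 0)
    (hμs : μ s ≠ ∞) (hF : IntegrableOn F s μ) {t : α} {G : ℝ} (hG : ∀ x ∈ s, ‖F t - F x‖ ≤ G) :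
    ‖F t - ⨍ x in s, F x ∂μ‖ ≤ G := by
  have : (⨍ x in s, F x ∂μ) ∈ closedBall (F t) G :=
    (convex_closedBall _ _).set_average_mem isClosed_closedBall h0 hμs
      ((ae_restrict_iff' hs).2 (Eventually.of_forall fun x hx => by
        rw [mem_closedBall, dist_comm, dist_eq_norm]; exact hG x hx)) hF
  rwa [mem_closedBall, dist_comm, dist_eq_norm] at this

theorem _root_.ContinuousLinearMap.setAverage_comp_comm {F : Type*} [NormedAddCommGroup F]
    [NormedSpace ℝ F] [CompleteSpace F] (L : E →L[ℝ] F) {f : α → E} {s : Set α}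
    (hf : IntegrableOn f s μ) : ⨍ x in s, L (f x) ∂μ = L (⨍ x in s, f x ∂μ) := by
  simp only [average_eq, L.integral_comp_comm hf, map_smul]

end MeasureTheory

section Interval

variable {X B Y : Type*} [NormedAddCommGroup X] [NormedSpace ℝ X] [NormedAddCommGroup B]
  [NormedSpace ℝ B] [NormedAddCommGroup Y] [NormedSpace ℝ Y] {a b : ℝ}

theorem norm_sub_le_setIntegral_norm_of_eq_add_integral {F g : ℝ → Y}
    (hg : IntegrableOn g (Icc a b)) (hF : ∀ t ∈ Icc a b, F t = F a + ∫ s in a..t, g s)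
    {s : Set ℝ} (hs : s.OrdConnected) (hsab : s ⊆ Icc a b) {t u : ℝ} (ht : t ∈ s) (hu : u ∈ s) :
    ‖F t - F u‖ ≤ ∫ x in s, ‖g x‖ := by
  have hii : ∀ r ∈ s, IntervalIntegrable g volume a r := fun r hr =>
    (hg.mono_set (by rw [uIcc_of_le (hsab hr).1]; exact Icc_subset_Icc_right (hsab hr).2)
      ).intervalIntegrable
  calc ‖F t - F u‖ = ‖∫ x in u..t, g x‖ := by
        rw [hF t (hsab ht), hF u (hsab hu), add_sub_add_left_eq_sub,
          intervalIntegral.integral_interval_sub_left (hii t ht) (hii u hu)]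
    _ ≤ ∫ x in uIoc u t, ‖g x‖ := intervalIntegral.norm_integral_le_integral_norm_uIoc
    _ ≤ ∫ x in s, ‖g x‖ :=
        setIntegral_mono_set (hg.mono_set hsab).norm (Eventually.of_forall fun _ => norm_nonneg _)
          (uIoc_subset_uIcc.trans (hs.uIcc_subset hu ht)).eventuallyLE

variable [CompleteSpace X] [CompleteSpace Y] {i : X →L[ℝ] B} {j : B →L[ℝ] Y} {η C : ℝ}
  {ι : Type*} [Fintype ι] {I : ι → Set ℝ} {f : ℝ → X} {g : ℝ → Y} {p : ℝ≥0∞}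

theorem norm_sub_piecewiseConst_setAverage_le (hC : 0 ≤ C)
    (hij : ∀ x, ‖i x‖ ≤ η * ‖x‖ + C * ‖j (i x)‖) (hI : Pairwise (Disjoint on I))
    (hIm : ∀ k, MeasurableSet (I k)) (hIo : ∀ k, (I k).OrdConnected) (hIab : ∀ k, I k ⊆ Icc a b)
    (hI0 : ∀ k, volume (I k) ≠ 0) (hf : IntegrableOn f (Icc a b)) (hg : IntegrableOn g (Icc a b))
    (hfg : ∀ t ∈ Icc a b, j (i (f t)) = j (i (f a)) + ∫ s in a..t, g s) {k : ι} {t : ℝ}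
    (ht : t ∈ I k) :
    ‖i (f t) - piecewiseConst I (fun k => i (⨍ s in I k, f s)) t‖
      ≤ η * ‖f t - piecewiseConst I (fun k => ⨍ s in I k, f s) t‖
        + C * piecewiseConst I (fun k => ∫ s in I k, ‖g s‖) t := by
  simp only [piecewiseConst_apply_of_mem hI _ ht]
  have hfk : IntegrableOn f (I k) := hf.mono_set (hIab k)
  have hosc : ‖j (i (f t - ⨍ s in I k, f s))‖ ≤ ∫ s in I k, ‖g s‖ := by
    have hav := (j.comp i).setAverage_comp_comm hfk
    simp only [ContinuousLinearMap.comp_apply] at hav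
    rw [map_sub, map_sub, ← hav]
    exact norm_sub_setAverage_le (hIm k) (hI0 k)
      ((measure_mono (hIab k)).trans_lt measure_Icc_lt_top).ne ((j.comp i).integrable_comp hfk)
      fun s hs => norm_sub_le_setIntegral_norm_of_eq_add_integral hg hfg (hIo k) (hIab k) ht hs
  calc ‖i (f t) - i (⨍ s in I k, f s)‖ = ‖i (f t - ⨍ s in I k, f s)‖ := by rw [map_sub]
    _ ≤ η * ‖f t - ⨍ s in I k, f s‖ + C * ‖j (i (f t - ⨍ s in I k, f s))‖ := hij _
    _ ≤ η * ‖f t - ⨍ s in I k, f s‖ + C * ∫ s in I k, ‖g s‖ := by gcongr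

theorem eLpNorm_sub_piecewiseConst_setAverage_le (hp : 1 ≤ p) (hp' : p ≠ ∞)
    (hη : 0 ≤ η) (hC : 0 ≤ C) (hij : ∀ x, ‖i x‖ ≤ η * ‖x‖ + C * ‖j (i x)‖)
    (hI : Pairwise (Disjoint on I)) (hIm : ∀ k, MeasurableSet (I k))
    (hIo : ∀ k, (I k).OrdConnected) (hIab : ∀ k, I k ⊆ Icc a b) (hI0 : ∀ k, volume (I k) ≠ 0)
    {δ : ℝ≥0∞} (hδ : ∀ k, volume (I k) ≤ δ)
    (hcover : ∀ᵐ t ∂volume.restrict (Icc a b), ∃ k, t ∈ I k)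
    (hf : MemLp f p (volume.restrict (Icc a b))) (hg : IntegrableOn g (Icc a b))
    (hfg : ∀ t ∈ Icc a b, j (i (f t)) = j (i (f a)) + ∫ s in a..t, g s) :
    eLpNorm (fun t => i (f t) - piecewiseConst I (fun k => i (⨍ s in I k, f s)) t) p
        (volume.restrict (Icc a b))
      ≤ 2 * eLpNorm f p (volume.restrict (Icc a b)) * ENNReal.ofReal η
        + ENNReal.ofReal C * ENNReal.ofReal (∫ t in Icc a b, ‖g t‖) * δ ^ (1 / p.toReal) := by
  set μ := volume.restrict (Icc a b)
  have hμI : ∀ k, μ.restrict (I k) = volume.restrict (I k) :=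
    fun k => Measure.restrict_restrict_of_subset (hIab k)
  set c := fun k => ⨍ s in I k, f s
  set G := fun k => ∫ s in I k, ‖g s‖
  have hJensen : eLpNorm (piecewiseConst I c) p μ ≤ eLpNorm f p μ := by
    simpa only [hμI] using eLpNorm_piecewiseConst_setAverage_le (μ := μ) hI hIm f hp hp'
  have hG : eLpNorm (piecewiseConst I G) p μ
      ≤ ENNReal.ofReal (∫ t in Icc a b, ‖g t‖) * δ ^ (1 / p.toReal) := by
    simpa only [hμI] using eLpNorm_piecewiseConst_setIntegral_norm_le (μ := μ) hI hIm
      (fun k => (Measure.restrict_apply_le _ _).trans (hδ k)) hg hp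
  have hc_meas := (stronglyMeasurable_piecewiseConst hIm c).aestronglyMeasurable (μ := μ)
  calc eLpNorm (fun t => i (f t) - piecewiseConst I (fun k => i (c k)) t) p μ
      ≤ eLpNorm (fun t => η * ‖f t - piecewiseConst I c t‖ + C * piecewiseConst I G t) p μ :=
        eLpNorm_mono_ae_real (hcover.mono fun t ⟨k, ht⟩ =>
          norm_sub_piecewiseConst_setAverage_le hC hij hI hIm hIo hIab hI0 (hf.integrable hp) hg
            hfg ht)
    _ ≤ eLpNorm (η • fun t => ‖f t - piecewiseConst I c t‖) p μ
          + eLpNorm (C • piecewiseConst I G) p μ :=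
        eLpNorm_add_le ((hf.1.sub hc_meas).norm.const_smul η)
          ((stronglyMeasurable_piecewiseConst hIm G).aestronglyMeasurable.const_smul C) hp
    _ = ENNReal.ofReal η * eLpNorm (f - piecewiseConst I c) p μ
          + ENNReal.ofReal C * eLpNorm (piecewiseConst I G) p μ := by
        rw [eLpNorm_const_smul, eLpNorm_const_smul, eLpNorm_norm, Real.enorm_of_nonneg hη,
          Real.enorm_of_nonneg hC]
        rfl
    _ ≤ ENNReal.ofReal η * (eLpNorm f p μ + eLpNorm f p μ)
          + ENNReal.ofReal C * (ENNReal.ofReal (∫ t in Icc a b, ‖g t‖) * δ ^ (1 / p.toReal)) := by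
        gcongr
        exact (eLpNorm_sub_le hf.1 hc_meas hp).trans (by gcongr)
    _ = _ := by ring

end Interval

def gridCell (δ : ℝ) (k : ℕ) : Set ℝ := Ico (k * δ) ((k + 1) * δ)

theorem pairwise_disjoint_gridCell {δ : ℝ} (hδ : 0 ≤ δ) : Pairwise (Disjoint on gridCell δ) := by
  have hmono : Monotone fun n : ℕ => (n : ℝ) * δ := fun n m h => by simp only; gcongr
  have := hmono.pairwise_disjoint_on_Ico_succ
  simp only [Order.succ_eq_add_one, Nat.cast_add, Nat.cast_one] at this
  exact this

theorem volume_gridCell (δ : ℝ) (k : ℕ) : volume (gridCell δ k) = ENNReal.ofReal δ := by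
  rw [gridCell, Real.volume_Ico]
  ring_nf

theorem gridCell_subset_Icc {T : ℝ} (hT : 0 ≤ T) {m k : ℕ} (hk : k < m) :
    gridCell (T / m) k ⊆ Icc 0 T := by
  have hkm : ((k : ℝ) + 1) * (T / m) ≤ T := by
    rcases Nat.eq_zero_or_pos m with rfl | hm
    · omega
    calc ((k : ℝ) + 1) * (T / m) ≤ m * (T / m) := by gcongr; exact_mod_cast hk
      _ = T := by field_simp
  exact fun t ht => ⟨(by positivity : (0 : ℝ) ≤ k * (T / m)).trans ht.1, ht.2.le.trans hkm⟩

theorem ae_exists_mem_gridCell {T : ℝ} {m : ℕ} (hm : 0 < m) :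
    ∀ᵐ t ∂volume.restrict (Icc 0 T), ∃ k : Fin m, t ∈ gridCell (T / m) k := by
  rw [← Measure.restrict_congr_set Ico_ae_eq_Icc]
  filter_upwards [ae_restrict_mem measurableSet_Ico] with t ht
  have hcover := Ico_subset_biUnion_Ico m fun n : ℕ => (n : ℝ) * (T / m)
  have hmT : (m : ℝ) * (T / m) = T := by field_simp
  simp only [Nat.cast_zero, zero_mul, hmT] at hcover
  obtain ⟨k, hk, htk⟩ := mem_iUnion₂.1 (hcover ht)
  exact ⟨⟨k, Finset.mem_range.1 hk⟩, by simpa [gridCell] using htk⟩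

theorem norm_setAverage_gridCell_le {E : Type*} [NormedAddCommGroup E] [NormedSpace ℝ E]
    [CompleteSpace E] {p : ℝ≥0∞} (hp : 1 ≤ p) {T : ℝ} (hT : 0 < T) {m k : ℕ} (hk : k < m)
    {f : ℝ → E} {M : ℝ≥0∞} (hM : eLpNorm f p (volume.restrict (Icc 0 T)) ≤ M) (hM' : M ≠ ∞) :
    ‖⨍ s in gridCell (T / m) k, f s‖ ≤ (M / ENNReal.ofReal (T / m) ^ (1 / p.toReal)).toReal := by
  have hm : (0 : ℝ) < m := by exact_mod_cast (Nat.zero_le k).trans_lt hk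
  simpa only [volume_gridCell] using norm_setAverage_le_of_eLpNorm_le (μ := volume) hp
    (by simp [volume_gridCell]; positivity) (by simp [volume_gridCell])
    ((eLpNorm_mono_measure _ (Measure.restrict_mono (gridCell_subset_Icc hT.le hk) le_rfl)).trans
      hM) hM'

theorem eLpNorm_sub_piecewiseConst_gridCell_le {X B Y : Type*} [NormedAddCommGroup X]
    [NormedSpace ℝ X] [CompleteSpace X] [NormedAddCommGroup B] [NormedSpace ℝ B]
    [NormedAddCommGroup Y] [NormedSpace ℝ Y] [CompleteSpace Y] {i : X →L[ℝ] B} {j : B →L[ℝ] Y}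
    {η C : ℝ} (hη : 0 ≤ η) (hC : 0 ≤ C) (hij : ∀ x, ‖i x‖ ≤ η * ‖x‖ + C * ‖j (i x)‖)
    {p : ℝ≥0∞} (hp : 1 ≤ p) (hp' : p ≠ ∞) {T : ℝ} (hT : 0 < T) {m : ℕ} (hm : 0 < m)
    {f : ℝ → X} {g : ℝ → Y} (hf : MemLp f p (volume.restrict (Icc 0 T)))
    (hg : IntegrableOn g (Icc 0 T))
    (hfg : ∀ t ∈ Icc 0 T, j (i (f t)) = j (i (f 0)) + ∫ s in 0..t, g s) :
    eLpNorm (fun t => i (f t) - piecewiseConst (fun k : Fin m => gridCell (T / m) k)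
        (fun k => i (⨍ s in gridCell (T / m) k, f s)) t) p (volume.restrict (Icc 0 T))
      ≤ 2 * eLpNorm f p (volume.restrict (Icc 0 T)) * ENNReal.ofReal η
        + ENNReal.ofReal C * ENNReal.ofReal (∫ t in Icc 0 T, ‖g t‖)
          * ENNReal.ofReal (T / m) ^ (1 / p.toReal) :=
  eLpNorm_sub_piecewiseConst_setAverage_le hp hp' hη hC hij
    ((pairwise_disjoint_gridCell (by positivity)).comp_of_injective Fin.val_injective)
    (fun _ => measurableSet_Ico) (fun _ => ordConnected_Ico)
    (fun k => gridCell_subset_Icc hT.le k.isLt) (fun k => by simp [volume_gridCell, hT, hm])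
    (fun k => (volume_gridCell _ k).le) (ae_exists_mem_gridCell hm) hf hg hfg

theorem stmt17_general
    {X B Y : Type*}
    [NormedAddCommGroup X] [NormedSpace ℝ X] [CompleteSpace X]
    [NormedAddCommGroup B] [NormedSpace ℝ B] [CompleteSpace B]
    [NormedAddCommGroup Y] [NormedSpace ℝ Y] [CompleteSpace Y]
    (i : X →L[ℝ] B) (hi_cpt : IsCompactOperator i)
    (j : B →L[ℝ] Y) (hj_inj : Function.Injective j)
    (T : ℝ) (hT : 0 < T)
    (p : ℝ≥0∞) [Fact (1 ≤ p)] (hp : p ≠ ⊤)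
    (𝓕 : Set (ℝ → X))
    (hmeas : ∀ f ∈ 𝓕, AEStronglyMeasurable f (volume.restrict (Set.Icc (0:ℝ) T)))
    (hbdd : ∃ M : ℝ≥0∞, M ≠ ⊤ ∧
      ∀ f ∈ 𝓕, eLpNorm f p (volume.restrict (Set.Icc (0:ℝ) T)) ≤ M)
    (hderiv : ∃ M' : ℝ, ∀ f ∈ 𝓕, ∃ g : ℝ → Y,
      IntegrableOn g (Set.Icc (0:ℝ) T) ∧
      (∀ t ∈ Set.Icc (0:ℝ) T, j (i (f t)) = j (i (f 0)) + ∫ s in (0:ℝ)..t, g s) ∧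
      (∫ t in Set.Icc (0:ℝ) T, ‖g t‖) ≤ M') :
    IsCompact (closure {h : Lp B p (volume.restrict (Set.Icc (0:ℝ) T)) |
      ∃ f ∈ 𝓕, ⇑h =ᵐ[volume.restrict (Set.Icc (0:ℝ) T)] fun t => i (f t)}) := by
  obtain ⟨M, hM_top, hM⟩ := hbdd
  obtain ⟨M', hM'⟩ := hderiv
  have hp1 : 1 ≤ p := Fact.out
  refine (totallyBounded_of_forall_subset_thickening fun ε hε => ?_).closure.isCompact_of_isClosed
    isClosed_closure
  have hε2 : ENNReal.ofReal ε / 2 ≠ 0 := by simpa using hε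
  obtain ⟨η, hη, hηM⟩ := ENNReal.exists_pos_mul_ofReal_lt (by finiteness : 2 * M ≠ ∞) hε2
  obtain ⟨C, hC, hij⟩ := hi_cpt.exists_norm_le_mul_norm_add_mul_norm_comp hj_inj hη
  obtain ⟨m, hm, hCm⟩ := ENNReal.exists_pos_nat_mul_ofReal_div_rpow_lt
    (by finiteness : ENNReal.ofReal C * ENNReal.ofReal M' ≠ ∞) hε2 T
    (one_div_pos.2 (ENNReal.toReal_pos (zero_lt_one.trans_le hp1).ne' hp))
  have hIm : ∀ k : Fin m, MeasurableSet (gridCell (T / m) k) := fun _ => measurableSet_Ico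
  set R := (M / ENNReal.ofReal (T / m) ^ (1 / p.toReal)).toReal
  refine ⟨piecewiseConstLp p _ hIm '' univ.pi fun _ => closure (i '' closedBall 0 R),
    ((isCompact_univ_pi fun _ => hi_cpt.isCompact_closure_image_closedBall
      (f := (i : X →ₗ[ℝ] B)) R).image (continuous_piecewiseConstLp hIm)).totallyBounded, ?_⟩
  rintro h ⟨f, hf, hfh⟩
  obtain ⟨g, hg, hfg, hgM⟩ := hM' f hf
  refine mem_thickening_iff.2 ⟨_, mem_image_of_mem _ fun k _ => subset_closure
    (mem_image_of_mem i (mem_closedBall_zero_iff.2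
      (norm_setAverage_gridCell_le hp1 hT k.isLt (hM f hf) hM_top))), ?_⟩
  rw [Lp.dist_def, eLpNorm_congr_ae (hfh.sub (coeFn_piecewiseConstLp hIm _))]
  refine ENNReal.toReal_lt_of_lt_ofReal ((eLpNorm_sub_piecewiseConst_gridCell_le hη.le hC hij hp1
    hp hT hm ⟨hmeas f hf, (hM f hf).trans_lt hM_top.lt_top⟩ hg hfg).trans_lt ?_)
  calc _ ≤ 2 * M * ENNReal.ofReal η
        + ENNReal.ofReal C * ENNReal.ofReal M' * ENNReal.ofReal (T / m) ^ (1 / p.toReal) := by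
        gcongr; exact hM f hf
    _ < ENNReal.ofReal ε := by simpa only [ENNReal.add_halves] using ENNReal.add_lt_add hηM hCm

/-- Aubin–Lions lemma, part (i). -/
theorem stmt17
    {X B Y : Type*}
    [NormedAddCommGroup X] [NormedSpace ℝ X] [CompleteSpace X]
    [NormedAddCommGroup B] [NormedSpace ℝ B] [CompleteSpace B]
    [NormedAddCommGroup Y] [NormedSpace ℝ Y] [CompleteSpace Y]
    (i : X →L[ℝ] B) (hi_inj : Function.Injective i) (hi_cpt : IsCompactOperator i)
    (j : B →L[ℝ] Y) (hj_inj : Function.Injective j)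
    (T : ℝ) (hT : 0 < T)
    (p : ℝ≥0∞) [Fact (1 ≤ p)] (hp : p ≠ ⊤)
    (𝓕 : Set (ℝ → X))
    (hmeas : ∀ f ∈ 𝓕, AEStronglyMeasurable f (volume.restrict (Set.Icc (0:ℝ) T)))
    (hbdd : ∃ M : ℝ≥0∞, M ≠ ⊤ ∧
      ∀ f ∈ 𝓕, eLpNorm f p (volume.restrict (Set.Icc (0:ℝ) T)) ≤ M)
    (hderiv : ∃ M' : ℝ, ∀ f ∈ 𝓕, ∃ g : ℝ → Y,
      IntegrableOn g (Set.Icc (0:ℝ) T) ∧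
      (∀ t ∈ Set.Icc (0:ℝ) T, j (i (f t)) = j (i (f 0)) + ∫ s in (0:ℝ)..t, g s) ∧
      (∫ t in Set.Icc (0:ℝ) T, ‖g t‖) ≤ M') :
    IsCompact (closure {h : Lp B p (volume.restrict (Set.Icc (0:ℝ) T)) |
      ∃ f ∈ 𝓕, ⇑h =ᵐ[volume.restrict (Set.Icc (0:ℝ) T)] fun t => i (f t)}) :=
  stmt17_general i hi_cpt j hj_inj T hT p hp 𝓕 hmeas hbdd hderiv
end
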